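/- arXiv:2409.19259 — 4 statements merged into one kernel-verified Lean document; each statement's English description precedes it below -/
import Mathlib

section
/- Let w satisfy Assumption (W) and let h(x) = ∫_ℝ e^{xz} w'(Φ(z)) φ(z) dz. Then h(0) = 1 and h(x) < ∞ for every x ∈ ℝ. -/
open MeasureTheory Set Filter Topology

/-- The standard normal density φ. -/
noncomputable def stdGaussianPdf (z : ℝ) : ℝ :=
  (Real.sqrt (2 * Real.pi))⁻¹ * Real.exp (-(z ^ 2) / 2)

/-- The standard normal cumulative distribution function Φ. -/
noncomputable def stdGaussianCdf (x : ℝ) : ℝ :=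
  ∫ z in Set.Iic x, stdGaussianPdf z

/-- Assumption (W) on a probability weighting function `w` with derivative `w'`. -/
structure AssumptionW (w w' : ℝ → ℝ) : Prop where
  mono : StrictMonoOn w (Set.Icc 0 1)
  deriv : ∀ p ∈ Set.Icc (0:ℝ) 1, HasDerivWithinAt w (w' p) (Set.Icc 0 1) p
  contDeriv : ContinuousOn w' (Set.Icc 0 1)
  zero : w 0 = 0
  one : w 1 = 1
  growth : ∃ c > 0, ∃ α ∈ Set.Ioo (-1 : ℝ) 0,
    ∀ p ∈ Set.Ioo (0:ℝ) 1, w' p ≤ c * (p ^ α + (1 - p) ^ α)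

/-- `hInt w' x = ∫_ℝ e^{xz} w'(Φ(z)) φ(z) dz`. -/
noncomputable def hInt (w' : ℝ → ℝ) (x : ℝ) : ℝ :=
  ∫ z, Real.exp (x * z) * w' (stdGaussianCdf z) * stdGaussianPdf z

/-!
Comparing `Φ z` and `1 - Φ z` with the mass of `φ` on a unit interval next to `z` gives
`min (Φ z) (1 - Φ z) ≥ φ (|z| + 1)`. As `α < 0`, the growth bound of Assumption (W) turns this into
`w' (Φ z) ≤ 2 c φ (|z| + 1) ^ α`, and `e^{xz} φ (|z| + 1) ^ α φ z` is a multiple of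
`e^{-α|z| + xz - (1 + α) z² / 2}`, which is integrable because `1 + α > 0`. Finally `w ∘ Φ` is a
primitive of `w' (Φ z) φ z` tending to `w 0 = 0` and `w 1 = 1`, so `h 0 = 1`.
-/

open ProbabilityTheory

lemma integrable_exp_mul_sub_mul_sq (a : ℝ) {b : ℝ} (hb : 0 < b) :
    Integrable fun z : ℝ ↦ Real.exp (a * z - b * z ^ 2) := by
  refine (((integrable_exp_neg_mul_sq hb).comp_sub_right (a / (2 * b))).const_mul
    (Real.exp (a ^ 2 / (4 * b)))).congr (Eventually.of_forall fun z ↦ ?_)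
  -- completing the square: `a z - b z² = a² / (4b) - b (z - a / (2b))²`
  simp only [← Real.exp_add]
  congr 1
  field_simp
  ring

lemma integrable_exp_mul_abs_add_mul_sub_mul_sq (c a : ℝ) {b : ℝ} (hb : 0 < b) :
    Integrable fun z : ℝ ↦ Real.exp (c * |z| + a * z - b * z ^ 2) := by
  -- `e^{c|z|} ≤ e^{cz} + e^{-cz}`
  refine ((integrable_exp_mul_sub_mul_sq (a + c) hb).add
    (integrable_exp_mul_sub_mul_sq (a - c) hb)).mono' (by fun_prop)
    (Eventually.of_forall fun z ↦ ?_)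
  rw [Real.norm_of_nonneg (Real.exp_pos _).le]
  rcases le_total 0 z with hz | hz
  · rw [abs_of_nonneg hz]
    exact le_add_of_le_of_nonneg (Real.exp_le_exp.mpr (le_of_eq (by ring))) (Real.exp_pos _).le
  · rw [abs_of_nonpos hz]
    exact le_add_of_nonneg_of_le (Real.exp_pos _).le (Real.exp_le_exp.mpr (le_of_eq (by ring)))

lemma stdGaussianPdf_eq_gaussianPDFReal : stdGaussianPdf = gaussianPDFReal 0 1 := by
  ext z; simp [stdGaussianPdf, gaussianPDFReal]

lemma stdGaussianPdf_pos (z : ℝ) : 0 < stdGaussianPdf z := by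
  unfold stdGaussianPdf; positivity

lemma continuous_stdGaussianPdf : Continuous stdGaussianPdf := by
  unfold stdGaussianPdf; fun_prop

lemma integrable_stdGaussianPdf : Integrable stdGaussianPdf :=
  stdGaussianPdf_eq_gaussianPDFReal ▸ integrable_gaussianPDFReal 0 1

lemma stdGaussianPdf_le_of_abs_le {s t : ℝ} (h : |t| ≤ s) :
    stdGaussianPdf s ≤ stdGaussianPdf t := by
  unfold stdGaussianPdf
  gcongr _ * Real.exp ?_
  linarith [sq_le_sq' (abs_le.mp h).1 (abs_le.mp h).2]

lemma integrable_exp_mul_mul_stdGaussianPdf_abs_add_one_rpow (x : ℝ) {α : ℝ} (hα : -1 < α) :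
    Integrable fun z ↦ Real.exp (x * z) * (stdGaussianPdf (|z| + 1) ^ α * stdGaussianPdf z) := by
  set D := (Real.sqrt (2 * Real.pi))⁻¹ with hD
  have hDpos : 0 < D := by positivity
  have hform : ∀ z : ℝ, Real.exp (x * z) * (stdGaussianPdf (|z| + 1) ^ α * stdGaussianPdf z) =
      D ^ α * D * Real.exp (-α / 2) * Real.exp (-α * |z| + x * z - (1 + α) / 2 * z ^ 2) := by
    intro z
    have hsq : (|z| + 1) ^ 2 = z ^ 2 + 2 * |z| + 1 := by rw [add_sq, sq_abs]; ring
    simp only [stdGaussianPdf, ← hD]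
    rw [Real.mul_rpow hDpos.le (Real.exp_pos _).le, ← Real.exp_mul,
      show -α * |z| + x * z - (1 + α) / 2 * z ^ 2 =
        x * z + (-((|z| + 1) ^ 2) / 2 * α + -(z ^ 2) / 2) - -α / 2 by rw [hsq]; ring,
      Real.exp_sub, Real.exp_add, Real.exp_add]
    field_simp
  simp_rw [hform]
  exact (integrable_exp_mul_abs_add_mul_sub_mul_sq _ _ (by linarith)).const_mul _

lemma stdGaussianCdf_eq_cdf : stdGaussianCdf = cdf (gaussianReal 0 1) := by
  ext x
  rw [cdf_eq_real, measureReal_def, gaussianReal_apply_eq_integral _ one_ne_zero,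
    ENNReal.toReal_ofReal (setIntegral_nonneg measurableSet_Iic fun _ _ ↦
      gaussianPDFReal_nonneg _ _ _), stdGaussianCdf, stdGaussianPdf_eq_gaussianPDFReal]

lemma tendsto_stdGaussianCdf_atBot : Tendsto stdGaussianCdf atBot (𝓝 0) :=
  stdGaussianCdf_eq_cdf ▸ tendsto_cdf_atBot _

lemma tendsto_stdGaussianCdf_atTop : Tendsto stdGaussianCdf atTop (𝓝 1) :=
  stdGaussianCdf_eq_cdf ▸ tendsto_cdf_atTop _

lemma stdGaussianCdf_sub (a b : ℝ) :
    stdGaussianCdf b - stdGaussianCdf a = ∫ t in a..b, stdGaussianPdf t :=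
  intervalIntegral.integral_Iic_sub_Iic integrable_stdGaussianPdf.integrableOn
    integrable_stdGaussianPdf.integrableOn

lemma hasDerivAt_stdGaussianCdf (x : ℝ) :
    HasDerivAt stdGaussianCdf (stdGaussianPdf x) x := by
  have h := ((continuous_stdGaussianPdf.integral_hasStrictDerivAt 0 x).hasDerivAt).const_add
    (stdGaussianCdf 0)
  refine h.congr_of_eventuallyEq (Eventually.of_forall fun u ↦ ?_)
  simp only [← stdGaussianCdf_sub, add_sub_cancel]

lemma continuous_stdGaussianCdf : Continuous stdGaussianCdf :=
  continuous_iff_continuousAt.2 fun x ↦ (hasDerivAt_stdGaussianCdf x).continuousAt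

lemma stdGaussianPdf_le_stdGaussianCdf_add_one_sub {a s : ℝ}
    (h : ∀ t ∈ Icc a (a + 1), |t| ≤ s) :
    stdGaussianPdf s ≤ stdGaussianCdf (a + 1) - stdGaussianCdf a := by
  rw [stdGaussianCdf_sub, intervalIntegral.integral_of_le (by linarith)]
  simpa using setIntegral_ge_of_const_le_real measurableSet_Ioc (by simp)
    (fun t ht ↦ stdGaussianPdf_le_of_abs_le (h t (Ioc_subset_Icc_self ht)))
    integrable_stdGaussianPdf.integrableOn

lemma abs_le_abs_add_one_of_mem_Icc {t z : ℝ} (h : t ∈ Icc (z - 1) (z + 1)) : |t| ≤ |z| + 1 := by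
  have : |t - z| ≤ 1 := abs_le.mpr ⟨by linarith [h.1], by linarith [h.2]⟩
  linarith [abs_sub_abs_le_abs_sub t z]

lemma stdGaussianPdf_abs_add_one_le_stdGaussianCdf (z : ℝ) :
    stdGaussianPdf (|z| + 1) ≤ stdGaussianCdf z := by
  have h := stdGaussianPdf_le_stdGaussianCdf_add_one_sub (a := z - 1) (s := |z| + 1)
    fun t ht ↦ abs_le_abs_add_one_of_mem_Icc ⟨ht.1, by linarith [ht.2]⟩
  rw [sub_add_cancel] at h
  linarith [stdGaussianCdf_eq_cdf ▸ cdf_nonneg (gaussianReal 0 1) (z - 1)]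

lemma stdGaussianPdf_abs_add_one_le_one_sub_stdGaussianCdf (z : ℝ) :
    stdGaussianPdf (|z| + 1) ≤ 1 - stdGaussianCdf z := by
  have h := stdGaussianPdf_le_stdGaussianCdf_add_one_sub (a := z) (s := |z| + 1)
    fun t ht ↦ abs_le_abs_add_one_of_mem_Icc ⟨by linarith [ht.1], ht.2⟩
  linarith [stdGaussianCdf_eq_cdf ▸ cdf_le_one (gaussianReal 0 1) (z + 1)]

lemma stdGaussianCdf_mem_Ioo (z : ℝ) : stdGaussianCdf z ∈ Ioo 0 1 :=
  ⟨(stdGaussianPdf_pos _).trans_le (stdGaussianPdf_abs_add_one_le_stdGaussianCdf z),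
    by linarith [stdGaussianPdf_pos (|z| + 1),
      stdGaussianPdf_abs_add_one_le_one_sub_stdGaussianCdf z]⟩

namespace AssumptionW

variable {w w' : ℝ → ℝ}

lemma deriv_nonneg (hw : AssumptionW w w') {p : ℝ} (hp : p ∈ Icc 0 1) : 0 ≤ w' p := by
  rw [← (hw.deriv p hp).derivWithin (uniqueDiffOn_Icc zero_lt_one p hp)]
  exact hw.mono.monotoneOn.derivWithin_nonneg

lemma exists_deriv_comp_stdGaussianCdf_le (hw : AssumptionW w w') :
    ∃ C α : ℝ, -1 < α ∧ ∀ z, w' (stdGaussianCdf z) ≤ C * stdGaussianPdf (|z| + 1) ^ α := by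
  obtain ⟨c, hc, α, hα, hgrowth⟩ := hw.growth
  refine ⟨2 * c, α, hα.1, fun z ↦ ?_⟩
  have hΦ : stdGaussianCdf z ^ α ≤ stdGaussianPdf (|z| + 1) ^ α :=
    Real.rpow_le_rpow_of_nonpos (stdGaussianPdf_pos _)
      (stdGaussianPdf_abs_add_one_le_stdGaussianCdf z) hα.2.le
  have hΦc : (1 - stdGaussianCdf z) ^ α ≤ stdGaussianPdf (|z| + 1) ^ α :=
    Real.rpow_le_rpow_of_nonpos (stdGaussianPdf_pos _)
      (stdGaussianPdf_abs_add_one_le_one_sub_stdGaussianCdf z) hα.2.le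
  calc w' (stdGaussianCdf z)
      ≤ c * (stdGaussianCdf z ^ α + (1 - stdGaussianCdf z) ^ α) :=
        hgrowth _ (stdGaussianCdf_mem_Ioo z)
    _ ≤ c * (stdGaussianPdf (|z| + 1) ^ α + stdGaussianPdf (|z| + 1) ^ α) := by gcongr
    _ = 2 * c * stdGaussianPdf (|z| + 1) ^ α := by ring

lemma integrable_integrand (hw : AssumptionW w w') (x : ℝ) :
    Integrable fun z ↦ Real.exp (x * z) * w' (stdGaussianCdf z) * stdGaussianPdf z := by
  obtain ⟨C, α, hα, hbound⟩ := hw.exists_deriv_comp_stdGaussianCdf_le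
  have hcont : Continuous fun z ↦ w' (stdGaussianCdf z) :=
    hw.contDeriv.comp_continuous continuous_stdGaussianCdf
      fun z ↦ Ioo_subset_Icc_self (stdGaussianCdf_mem_Ioo z)
  refine ((integrable_exp_mul_mul_stdGaussianPdf_abs_add_one_rpow x hα).const_mul C).mono'
    ((((continuous_const_mul x).rexp).mul hcont).mul continuous_stdGaussianPdf).aestronglyMeasurable
    (Eventually.of_forall fun z ↦ ?_)
  have hw'z : 0 ≤ w' (stdGaussianCdf z) :=
    hw.deriv_nonneg (Ioo_subset_Icc_self (stdGaussianCdf_mem_Ioo z))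
  have hφz := (stdGaussianPdf_pos z).le
  rw [Real.norm_of_nonneg (by positivity)]
  calc Real.exp (x * z) * w' (stdGaussianCdf z) * stdGaussianPdf z
      ≤ Real.exp (x * z) * (C * stdGaussianPdf (|z| + 1) ^ α) * stdGaussianPdf z := by
        gcongr; exact hbound z
    _ = C * (Real.exp (x * z) * (stdGaussianPdf (|z| + 1) ^ α * stdGaussianPdf z)) := by ring

lemma hasDerivAt_comp_stdGaussianCdf (hw : AssumptionW w w') (z : ℝ) :
    HasDerivAt (fun t ↦ w (stdGaussianCdf t)) (w' (stdGaussianCdf z) * stdGaussianPdf z) z := by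
  have hz := stdGaussianCdf_mem_Ioo z
  exact ((hw.deriv _ (Ioo_subset_Icc_self hz)).hasDerivAt (Icc_mem_nhds hz.1 hz.2)).comp z
    (hasDerivAt_stdGaussianCdf z)

lemma tendsto_comp_stdGaussianCdf (hw : AssumptionW w w') {l : Filter ℝ} {p : ℝ}
    (hp : p ∈ Icc 0 1) (h : Tendsto stdGaussianCdf l (𝓝 p)) :
    Tendsto (fun t ↦ w (stdGaussianCdf t)) l (𝓝 (w p)) :=
  (hw.deriv p hp).continuousWithinAt.tendsto.comp <| tendsto_nhdsWithin_iff.2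
    ⟨h, Eventually.of_forall fun z ↦ Ioo_subset_Icc_self (stdGaussianCdf_mem_Ioo z)⟩

lemma hInt_zero (hw : AssumptionW w w') : hInt w' 0 = 1 := by
  have hint := hw.integrable_integrand 0
  simp only [zero_mul, Real.exp_zero, one_mul] at hint
  have hFTC := integral_of_hasDerivAt_of_tendsto hw.hasDerivAt_comp_stdGaussianCdf hint
    (hw.tendsto_comp_stdGaussianCdf (left_mem_Icc.2 zero_le_one) tendsto_stdGaussianCdf_atBot)
    (hw.tendsto_comp_stdGaussianCdf (right_mem_Icc.2 zero_le_one) tendsto_stdGaussianCdf_atTop)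
  simp only [hInt, zero_mul, Real.exp_zero, one_mul, hFTC, hw.zero, hw.one, sub_zero]

end AssumptionW

/-- `h(0) = 1` and `h(x) < ∞` (i.e. the defining integrand is integrable)
for every `x ∈ ℝ`. -/
theorem stmt0 (w w' : ℝ → ℝ) (hw : AssumptionW w w') :
    hInt w' 0 = 1 ∧
      ∀ x : ℝ,
        Integrable (fun z => Real.exp (x * z) * w' (stdGaussianCdf z) * stdGaussianPdf z) :=
  ⟨hw.hInt_zero, hw.integrable_integrand⟩
end

section
/- Let γ ≥ 1, x > 0, let w satisfy Assumption (W) with dual w̄(p) = 1 − w(1−p), and let Q_ρ:(0,1)→(0,∞) be an increasing function with ∫₀¹ Q_ρ(p) dp < ∞. Suppose either (i) γ > 1 and the limit lim_{p↓0} w'(p)/Q_ρ(p) exists in (0,∞], or (ii) γ = 1 and lim_{p↓0} w'(p)/Q_ρ(p) = ∞. Then the supremum, over all increasing right-continuous functions Q:(0,1)→(0,∞) satisfying the budget constraint ∫₀¹ Q(p) Q_ρ(1−p) dp ≤ x, of the value (1/γ)∫₀¹ Q(p)^γ dw̄(p) (the Lebesgue–Stieltjes integral of Q^γ with respect to w̄)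 equals +∞. -/
open MeasureTheory Set Filter Topology

open scoped ENNReal

/-! Concentrate the budget near `p = 1`. With `m t = ∫₀ᵗ Qρ` and `W t = ∫₀ᵗ w'`, the step
function equal to `a = x / (2 m p₀)` on `[1 - p₀, 1)` and to a small positive constant below it
is admissible, and its value is at least `(1/γ) (x/2)^γ W p₀ / (m p₀)^γ`. The limit hypothesis
gives `W ≥ ρ m` near `0`, so this ratio is at least `ρ (m p₀)^(1-γ)`, which blows up as `p₀ ↓ 0`
when `γ > 1` because `m p₀ → 0`; when `γ = 1` the ratio is at least `ρ` for every `ρ`. -/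

lemma AssumptionW.deriv_nonneg_s5 {w w' : ℝ → ℝ} (hw : AssumptionW w w') {p : ℝ}
    (hp : p ∈ Icc (0:ℝ) 1) : 0 ≤ w' p :=
  (hw.deriv p hp).nonneg_of_monotoneOn
    (uniqueDiffWithinAt_iff_accPt.mp (uniqueDiffOn_Icc zero_lt_one p hp)) hw.mono.monotoneOn

lemma setLIntegral_Ioo_zero_one_comp_one_sub (g : ℝ → ℝ≥0∞) :
    ∫⁻ p in Ioo 0 1, g (1 - p) = ∫⁻ q in Ioo 0 1, g q := by
  have h := (Measure.measurePreserving_sub_left volume (1:ℝ)).setLIntegral_comp_preimage_emb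
    (MeasurableEquiv.subLeft (1:ℝ)).measurableEmbedding g (Ioo 0 1)
  rwa [preimage_const_sub_Ioo, sub_self, sub_zero] at h

lemma ofReal_const_mul_setIntegral {α : Type*} [MeasurableSpace α] {μ : Measure α} {s : Set α}
    {f : α → ℝ} {c : ℝ} (hs : MeasurableSet s) (hf : IntegrableOn f s μ)
    (hf0 : ∀ q ∈ s, 0 ≤ f q) (hc : 0 ≤ c) :
    ENNReal.ofReal (c * ∫ q in s, f q ∂μ) = ∫⁻ q in s, ENNReal.ofReal (c * f q) ∂μ := by
  rw [← integral_const_mul, ofReal_integral_eq_lintegral_ofReal (hf.const_mul c)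
    ((ae_restrict_iff' hs).2 (ae_of_all _ fun q hq => mul_nonneg hc (hf0 q hq)))]

lemma eventually_forall_Ioc_of_eventually {a : ℝ} {P : ℝ → Prop}
    (h : ∀ᶠ q in 𝓝[>] a, P q) :
    ∀ᶠ p in 𝓝[>] a, ∀ q ∈ Ioc a p, P q := by
  obtain ⟨u, hau, hu⟩ := mem_nhdsGT_iff_exists_Ioo_subset.mp h
  filter_upwards [Ioo_mem_nhdsGT hau] with p hp q hq
  exact hu ⟨hq.1, hq.2.trans_lt hp.2⟩

section Primitive

variable {f g : ℝ → ℝ}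

lemma tendsto_intervalIntegral_nhdsGT_zero (hf : IntervalIntegrable f volume 0 1)
    (hpos : ∀ q ∈ Ioo (0:ℝ) 1, 0 < f q) :
    Tendsto (fun t => ∫ q in 0..t, f q) (𝓝[>] 0) (𝓝[>] 0) := by
  have hcont : ContinuousWithinAt (fun t => ∫ q in 0..t, f q) (Ioo 0 1) 0 := by
    refine (intervalIntegral.continuousOn_primitive_interval' hf left_mem_uIcc 0
      left_mem_uIcc).mono ?_
    rw [uIcc_of_le zero_le_one]
    exact Ioo_subset_Icc_self
  refine tendsto_nhdsWithin_iff.2 ⟨?_, ?_⟩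
  · rw [← nhdsWithin_Ioo_eq_nhdsGT zero_lt_one]
    simpa using hcont.tendsto
  filter_upwards [Ioo_mem_nhdsGT zero_lt_one] with t ht
  exact intervalIntegral.intervalIntegral_pos_of_pos_on
    (hf.mono_set (uIcc_subset_uIcc left_mem_uIcc (mem_uIcc_of_le ht.1.le ht.2.le)))
    (fun q hq => hpos q ⟨hq.1, hq.2.trans ht.2⟩) ht.1

lemma eventually_mul_intervalIntegral_le {ρ : ℝ} (hf : IntervalIntegrable f volume 0 1)
    (hg : IntervalIntegrable g volume 0 1) (hpos : ∀ q ∈ Ioo (0:ℝ) 1, 0 < f q)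
    (h : ∀ᶠ q in 𝓝[>] 0, ρ ≤ g q / f q) :
    ∀ᶠ p in 𝓝[>] 0, ρ * ∫ q in 0..p, f q ≤ ∫ q in 0..p, g q := by
  filter_upwards [eventually_forall_Ioc_of_eventually h, Ioo_mem_nhdsGT zero_lt_one]
    with p hρ hp
  have hsub : uIcc 0 p ⊆ uIcc 0 1 :=
    uIcc_subset_uIcc left_mem_uIcc (mem_uIcc_of_le hp.1.le hp.2.le)
  rw [← intervalIntegral.integral_const_mul]
  refine intervalIntegral.integral_mono_on_of_le_Ioo hp.1.le ((hf.mono_set hsub).const_mul ρ)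
    (hg.mono_set hsub) fun q hq => ?_
  exact (le_div_iff₀ (hpos q ⟨hq.1, hq.2.trans hp.2⟩)).mp (hρ q (Ioo_subset_Ioc_self hq))

lemma tendsto_intervalIntegral_div_rpow_atTop {γ ρ : ℝ} (hγ : 1 < γ) (hρ : 0 < ρ)
    (hf : IntervalIntegrable f volume 0 1) (hg : IntervalIntegrable g volume 0 1)
    (hpos : ∀ q ∈ Ioo (0:ℝ) 1, 0 < f q) (h : ∀ᶠ q in 𝓝[>] 0, ρ ≤ g q / f q) :
    Tendsto (fun p => (∫ q in 0..p, g q) / (∫ q in 0..p, f q) ^ γ) (𝓝[>] 0) atTop := by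
  have hF := tendsto_intervalIntegral_nhdsGT_zero hf hpos
  refine tendsto_atTop_mono' _ ?_ <|
    ((tendsto_rpow_neg_nhdsGT_zero (sub_neg.mpr hγ)).comp hF).const_mul_atTop hρ
  filter_upwards [eventually_mul_intervalIntegral_le hf hg hpos h, hF self_mem_nhdsWithin]
    with p hp hFp
  rw [Function.comp_apply, le_div_iff₀ (Real.rpow_pos_of_pos hFp γ), mul_assoc,
    ← Real.rpow_add hFp, sub_add_cancel, Real.rpow_one]
  exact hp

lemma tendsto_intervalIntegral_div_atTop (hf : IntervalIntegrable f volume 0 1)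
    (hg : IntervalIntegrable g volume 0 1) (hpos : ∀ q ∈ Ioo (0:ℝ) 1, 0 < f q)
    (h : Tendsto (fun q => g q / f q) (𝓝[>] 0) atTop) :
    Tendsto (fun p => (∫ q in 0..p, g q) / ∫ q in 0..p, f q) (𝓝[>] 0) atTop := by
  refine tendsto_atTop.2 fun ρ => ?_
  filter_upwards [eventually_mul_intervalIntegral_le hf hg hpos (h.eventually_ge_atTop ρ),
    tendsto_intervalIntegral_nhdsGT_zero hf hpos self_mem_nhdsWithin] with p hp hFp
  rwa [le_div_iff₀ hFp]

end Primitive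

noncomputable def stepFn (c ε a : ℝ) (p : ℝ) : ℝ := if p < c then ε else a

section StepFn

variable {c ε a p₀ q : ℝ}

lemma stepFn_monotone (h : ε ≤ a) : Monotone (stepFn c ε a) := by
  intro p p' hpp'
  unfold stepFn
  split_ifs with hp hp' hp'
  · exact le_rfl
  · exact h
  · exact absurd (hpp'.trans_lt hp') hp
  · exact le_rfl

lemma stepFn_pos (hε : 0 < ε) (ha : 0 < a) (p : ℝ) : 0 < stepFn c ε a p := by
  unfold stepFn
  split_ifs <;> assumption

lemma continuousWithinAt_Ici_stepFn (p : ℝ) : ContinuousWithinAt (stepFn c ε a) (Ici p) p := by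
  rcases lt_or_ge p c with hp | hp
  · exact (continuousAt_const.congr <| (eventually_lt_nhds hp).mono fun q hq =>
      (if_pos hq).symm).continuousWithinAt
  · exact continuousWithinAt_const.congr (fun q hq => if_neg (not_lt.2 (hp.trans hq)))
      (if_neg (not_lt.2 hp))

lemma stepFn_one_sub_of_le (hq : q ≤ p₀) : stepFn (1 - p₀) ε a (1 - q) = a :=
  if_neg (by linarith)

lemma stepFn_one_sub_of_lt (hq : p₀ < q) : stepFn (1 - p₀) ε a (1 - q) = ε :=
  if_pos (by linarith)

variable {f : ℝ → ℝ}

lemma setLIntegral_stepFn_mul_le (hf : IntegrableOn f (Ioo 0 1))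
    (hf0 : ∀ q ∈ Ioo (0:ℝ) 1, 0 ≤ f q) (hp₀ : p₀ ∈ Ioo (0:ℝ) 1) (hε : 0 ≤ ε)
    (ha : 0 ≤ a) :
    ∫⁻ p in Ioo 0 1, ENNReal.ofReal (stepFn (1 - p₀) ε a p * f (1 - p))
      ≤ ENNReal.ofReal (a * ∫ q in 0..p₀, f q) +
        ENNReal.ofReal (ε * ∫ q in Ioo 0 1, f q) := by
  have hIoc : Ioc 0 p₀ ⊆ Ioo (0:ℝ) 1 := Ioc_subset_Ioo_right hp₀.2
  have hrefl := setLIntegral_Ioo_zero_one_comp_one_sub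
    fun q => ENNReal.ofReal (stepFn (1 - p₀) ε a (1 - q) * f q)
  simp only [sub_sub_cancel] at hrefl
  rw [hrefl, intervalIntegral.integral_of_le hp₀.1.le,
    ofReal_const_mul_setIntegral measurableSet_Ioc (hf.mono_set hIoc)
      (fun q hq => hf0 q (hIoc hq)) ha,
    ofReal_const_mul_setIntegral measurableSet_Ioo hf hf0 hε]
  nth_rewrite 1 [← Ioc_union_Ioo_eq_Ioo hp₀.1.le hp₀.2]
  refine (lintegral_union_le _ _ _).trans (add_le_add (le_of_eq ?_) ?_)
  · exact setLIntegral_congr_fun measurableSet_Ioc fun q hq => by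
      rw [stepFn_one_sub_of_le hq.2]
  · calc ∫⁻ q in Ioo p₀ 1, ENNReal.ofReal (stepFn (1 - p₀) ε a (1 - q) * f q)
        = ∫⁻ q in Ioo p₀ 1, ENNReal.ofReal (ε * f q) :=
          setLIntegral_congr_fun measurableSet_Ioo fun q hq => by
            rw [stepFn_one_sub_of_lt hq.1]
      _ ≤ ∫⁻ q in Ioo 0 1, ENNReal.ofReal (ε * f q) :=
          lintegral_mono_set (Ioo_subset_Ioo_left hp₀.1.le)

lemma ofReal_rpow_mul_intervalIntegral_le (hf : IntegrableOn f (Ioo 0 1))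
    (hf0 : ∀ q ∈ Ioo (0:ℝ) 1, 0 ≤ f q) (hp₀ : p₀ ∈ Ioo (0:ℝ) 1) (ha : 0 ≤ a)
    (γ : ℝ) :
    ENNReal.ofReal (a ^ γ * ∫ q in 0..p₀, f q)
      ≤ ∫⁻ p in Ioo 0 1, ENNReal.ofReal (stepFn (1 - p₀) ε a p ^ γ * f (1 - p)) := by
  have hIoc : Ioc 0 p₀ ⊆ Ioo (0:ℝ) 1 := Ioc_subset_Ioo_right hp₀.2
  have hrefl := setLIntegral_Ioo_zero_one_comp_one_sub
    fun q => ENNReal.ofReal (stepFn (1 - p₀) ε a (1 - q) ^ γ * f q)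
  simp only [sub_sub_cancel] at hrefl
  rw [hrefl, intervalIntegral.integral_of_le hp₀.1.le,
    ofReal_const_mul_setIntegral measurableSet_Ioc (hf.mono_set hIoc)
      (fun q hq => hf0 q (hIoc hq)) (Real.rpow_nonneg ha γ)]
  calc ∫⁻ q in Ioc 0 p₀, ENNReal.ofReal (a ^ γ * f q)
      = ∫⁻ q in Ioc 0 p₀, ENNReal.ofReal (stepFn (1 - p₀) ε a (1 - q) ^ γ * f q) :=
        setLIntegral_congr_fun measurableSet_Ioc fun q hq => by
          rw [stepFn_one_sub_of_le hq.2]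
    _ ≤ _ := lintegral_mono_set hIoc

end StepFn

def IsAdmissibleQuantile (Qρ : ℝ → ℝ) (x : ℝ) (Q : ℝ → ℝ) : Prop :=
  MonotoneOn Q (Ioo 0 1) ∧ (∀ p ∈ Ioo (0:ℝ) 1, ContinuousWithinAt Q (Ici p) p) ∧
    (∀ p ∈ Ioo (0:ℝ) 1, 0 < Q p) ∧
    ∫⁻ p in Ioo (0:ℝ) 1, ENNReal.ofReal (Q p * Qρ (1 - p)) ≤ ENNReal.ofReal x

lemma exists_isAdmissibleQuantile_le {Qρ g : ℝ → ℝ} {x γ p₀ : ℝ} (hx : 0 < x)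
    (hQρ : IntegrableOn Qρ (Ioo 0 1)) (hQρpos : ∀ q ∈ Ioo (0:ℝ) 1, 0 < Qρ q)
    (hg : IntegrableOn g (Ioo 0 1)) (hg0 : ∀ q ∈ Ioo (0:ℝ) 1, 0 ≤ g q)
    (hp₀ : p₀ ∈ Ioo (0:ℝ) 1) :
    ∃ Q, IsAdmissibleQuantile Qρ x Q ∧
      ENNReal.ofReal ((x / 2) ^ γ * ((∫ q in 0..p₀, g q) / (∫ q in 0..p₀, Qρ q) ^ γ))
        ≤ ∫⁻ p in Ioo 0 1, ENNReal.ofReal (Q p ^ γ * g (1 - p)) := by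
  set m := ∫ q in 0..p₀, Qρ q
  set T := ∫ q in Ioo 0 1, Qρ q
  have hm : 0 < m := intervalIntegral.intervalIntegral_pos_of_pos_on
    ((intervalIntegrable_iff_integrableOn_Ioo_of_le hp₀.1.le).2
      (hQρ.mono_set (Ioo_subset_Ioo_right hp₀.2.le)))
    (fun q hq => hQρpos q ⟨hq.1, hq.2.trans hp₀.2⟩) hp₀.1
  have hT : 0 ≤ T := setIntegral_nonneg measurableSet_Ioo fun q hq => (hQρpos q hq).le
  -- `a` spends half the budget on `[1 - p₀, 1)`, `ε` at most the other half on the rest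
  set a := x / (2 * m)
  set ε := min a (x / (2 * (T + 1)))
  have ha : 0 < a := by positivity
  have hε : 0 < ε := lt_min ha (by positivity)
  refine ⟨stepFn (1 - p₀) ε a, ⟨(stepFn_monotone (min_le_left _ _)).monotoneOn _,
    fun p _ => continuousWithinAt_Ici_stepFn p, fun p _ => stepFn_pos hε ha p, ?_⟩, ?_⟩
  · have ham : a * m = x / 2 := by unfold a; field_simp
    have hεT : ε * T ≤ x / 2 :=
      calc ε * T ≤ x / (2 * (T + 1)) * (T + 1) :=
            mul_le_mul (min_le_right _ _) (le_add_of_nonneg_right zero_le_one) hT (by positivity)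
        _ = x / 2 := by field_simp
    calc _ ≤ ENNReal.ofReal (a * m) + ENNReal.ofReal (ε * T) :=
          setLIntegral_stepFn_mul_le hQρ (fun q hq => (hQρpos q hq).le) hp₀ hε.le ha.le
      _ ≤ ENNReal.ofReal (x / 2) + ENNReal.ofReal (x / 2) := by
          rw [ham]
          exact add_le_add le_rfl (ENNReal.ofReal_le_ofReal hεT)
      _ = ENNReal.ofReal x := by
          rw [← ENNReal.ofReal_add (by positivity) (by positivity), add_halves]
  · convert ofReal_rpow_mul_intervalIntegral_le hg hg0 hp₀ ha.le γ using 2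
    rw [show a = x / 2 / m by ring, Real.div_rpow (by positivity) hm.le]
    ring

theorem stmt5_general (γ x : ℝ) (hγ : 1 ≤ γ) (hx : 0 < x)
    (w w' : ℝ → ℝ) (hw : AssumptionW w w')
    (Qρ : ℝ → ℝ)
    (hQρpos : ∀ p ∈ Set.Ioo (0:ℝ) 1, 0 < Qρ p)
    (hQρint : IntegrableOn Qρ (Set.Ioo 0 1))
    (hlim :
      (1 < γ ∧ ((∃ L > (0:ℝ), Tendsto (fun p => w' p / Qρ p) (𝓝[>] 0) (𝓝 L)) ∨
          Tendsto (fun p => w' p / Qρ p) (𝓝[>] 0) atTop)) ∨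
      (γ = 1 ∧ Tendsto (fun p => w' p / Qρ p) (𝓝[>] 0) atTop)) :
    (⨆ Q : {Q : ℝ → ℝ //
        MonotoneOn Q (Set.Ioo 0 1) ∧
        (∀ p ∈ Set.Ioo (0:ℝ) 1, ContinuousWithinAt Q (Set.Ici p) p) ∧
        (∀ p ∈ Set.Ioo (0:ℝ) 1, 0 < Q p) ∧
        ∫⁻ p in Set.Ioo (0:ℝ) 1, ENNReal.ofReal (Q p * Qρ (1 - p)) ≤ ENNReal.ofReal x},
      ENNReal.ofReal (1 / γ) *
        ∫⁻ p in Set.Ioo (0:ℝ) 1, ENNReal.ofReal (Q.1 p ^ γ * w' (1 - p))) = ⊤ := by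
  have hw'int : IntegrableOn w' (Ioo 0 1) :=
    hw.contDeriv.integrableOn_Icc.mono_set Ioo_subset_Icc_self
  have hQρ' := (intervalIntegrable_iff_integrableOn_Ioo_of_le zero_le_one).2 hQρint
  have hw' := (intervalIntegrable_iff_integrableOn_Ioo_of_le zero_le_one).2 hw'int
  have hratio : Tendsto (fun p => (∫ q in 0..p, w' q) / (∫ q in 0..p, Qρ q) ^ γ)
      (𝓝[>] 0) atTop := by
    rcases hlim with ⟨hγ1, ⟨L, hL, hconv⟩ | hdiv⟩ | ⟨rfl, hdiv⟩
    · exact tendsto_intervalIntegral_div_rpow_atTop hγ1 (half_pos hL) hQρ' hw' hQρpos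
        (hconv.eventually (eventually_ge_nhds (half_lt_self hL)))
    · exact tendsto_intervalIntegral_div_rpow_atTop hγ1 one_pos hQρ' hw' hQρpos
        (hdiv.eventually_ge_atTop 1)
    · simpa using tendsto_intervalIntegral_div_atTop hQρ' hw' hQρpos hdiv
  have hK : 0 < 1 / γ * (x / 2) ^ γ := by positivity
  rw [iSup_eq_top]
  intro b hb
  obtain ⟨p₀, hbp₀, hp₀⟩ :=
    (((hratio.const_mul_atTop hK).eventually_gt_atTop b.toReal).and
      (Ioo_mem_nhdsGT zero_lt_one)).exists
  obtain ⟨Q, hQ, hval⟩ := exists_isAdmissibleQuantile_le (γ := γ) hx hQρint hQρpos hw'int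
    (fun q hq => hw.deriv_nonneg_s5 (Ioo_subset_Icc_self hq)) hp₀
  refine ⟨⟨Q, hQ⟩, ?_⟩
  calc b < ENNReal.ofReal (1 / γ * ((x / 2) ^ γ *
        ((∫ q in 0..p₀, w' q) / (∫ q in 0..p₀, Qρ q) ^ γ))) := by
        rw [ENNReal.lt_ofReal_iff_toReal_lt hb.ne, ← mul_assoc]
        exact hbp₀
    _ = ENNReal.ofReal (1 / γ) * ENNReal.ofReal ((x / 2) ^ γ *
        ((∫ q in 0..p₀, w' q) / (∫ q in 0..p₀, Qρ q) ^ γ)) :=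
        ENNReal.ofReal_mul (by positivity)
    _ ≤ _ := by gcongr

/-- for `γ ≥ 1`, under condition (i) or (ii), the supremum of the
rank-dependent value `(1/γ)∫₀¹ Q(p)^γ dw̄(p)` (written with the density
`w̄'(p) = w'(1−p)` of the dual distortion) over all increasing right-continuous
`Q:(0,1)→(0,∞)` satisfying the budget constraint `∫₀¹ Q(p) Q_ρ(1−p) dp ≤ x`
equals `+∞`. -/
theorem stmt5 (γ x : ℝ) (hγ : 1 ≤ γ) (hx : 0 < x)
    (w w' : ℝ → ℝ) (hw : AssumptionW w w')
    (Qρ : ℝ → ℝ)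
    (hQρpos : ∀ p ∈ Set.Ioo (0:ℝ) 1, 0 < Qρ p)
    (hQρmono : MonotoneOn Qρ (Set.Ioo 0 1))
    (hQρint : IntegrableOn Qρ (Set.Ioo 0 1))
    (hlim :
      (1 < γ ∧ ((∃ L > (0:ℝ), Tendsto (fun p => w' p / Qρ p) (𝓝[>] 0) (𝓝 L)) ∨
          Tendsto (fun p => w' p / Qρ p) (𝓝[>] 0) atTop)) ∨
      (γ = 1 ∧ Tendsto (fun p => w' p / Qρ p) (𝓝[>] 0) atTop)) :
    (⨆ Q : {Q : ℝ → ℝ //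
        MonotoneOn Q (Set.Ioo 0 1) ∧
        (∀ p ∈ Set.Ioo (0:ℝ) 1, ContinuousWithinAt Q (Set.Ici p) p) ∧
        (∀ p ∈ Set.Ioo (0:ℝ) 1, 0 < Q p) ∧
        ∫⁻ p in Set.Ioo (0:ℝ) 1, ENNReal.ofReal (Q p * Qρ (1 - p)) ≤ ENNReal.ofReal x},
      ENNReal.ofReal (1 / γ) *
        ∫⁻ p in Set.Ioo (0:ℝ) 1, ENNReal.ofReal (Q.1 p ^ γ * w' (1 - p))) = ⊤ :=
  stmt5_general γ x hγ hx w w' hw Qρ hQρpos hQρint hlim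
end

section
/- Let τ > 0 and let l:(0,τ]×(0,∞)→ℝ be continuous and bounded. Suppose there exists a function α:[0,τ]→ℝ, continuous on [0,τ] and continuously differentiable on (0,τ], such that α(0) = 0, α(t) > 0 for all t∈(0,τ], and l(t,α(t)) ≥ α'(t) for all t∈(0,τ). Then there exists a function y:[0,τ]→ℝ, continuous on [0,τ] and continuously differentiable on (0,τ], such that y(0) = 0, y(t) ≥ α(t) for all t∈[0,τ], and y'(t) = l(t,y(t)) for all t∈(0,τ]. -/
/-!
Replace `l` by `F t x = l t (max x (α t))`, which is continuous and bounded on `(0, τ] × ℝ`.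
For `ε > 0`, Tonelli's delayed equation `y t = ∫ s in 0..t - ε, F s (y s)`, with the time
variable of `F` frozen outside `[ε, τ]`, is solved by finitely many explicit iterations, because
the delay makes each iteration correct on a further interval of length `ε`. These approximate
solutions are `M`-Lipschitz, so by Arzelà–Ascoli a subsequence converges pointwise, and by
dominated convergence the limit solves the integral form of `y' = F t y` with `y 0 = 0`.
Wherever `y < α` this equation reads `y' = l t (α t) ≥ α'`, so `y - α`, which vanishes at `0`,
never becomes negative; hence `y ≥ α` and `F t (y t) = l t (y t)`.
-/

open MeasureTheory Set Filter Topology Function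
open scoped NNReal

theorem lipschitzWith_intervalIntegral {g : ℝ → ℝ} {M : ℝ≥0} (hg : Continuous g)
    (hgM : ∀ x, |g x| ≤ M) (a : ℝ) : LipschitzWith M fun t => ∫ s in a..t, g s :=
  LipschitzWith.of_dist_le_mul fun u v => by
    rw [Real.dist_eq, intervalIntegral.integral_interval_sub_left (hg.intervalIntegrable _ _)
      (hg.intervalIntegrable _ _), Real.dist_eq]
    exact intervalIntegral.norm_integral_le_of_norm_le_const fun x _ =>
      (Real.norm_eq_abs _).trans_le (hgM x)

theorem hasDerivWithinAt_Icc_integral {g : ℝ → ℝ} {a b x : ℝ} (hg : ContinuousOn g (Icc a b))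
    (hx : x ∈ Icc a b) : HasDerivWithinAt (fun u => ∫ v in a..u, g v) (g x) (Icc a b) x := by
  have : Fact (x ∈ Icc a b) := ⟨hx⟩
  exact intervalIntegral.integral_hasDerivWithinAt_right
    ((hg.mono (Icc_subset_Icc_right hx.2)).intervalIntegrable_of_Icc hx.1)
    (hg.stronglyMeasurableAtFilter_nhdsWithin measurableSet_Icc x) (hg x hx)

theorem hasDerivWithinAt_Ioc_of_eq_integral {Z g : ℝ → ℝ} {a b : ℝ} (hg : ContinuousOn g (Ioc a b))
    (hZ : ∀ s ∈ Ioc a b, ∀ t ∈ Icc s b, Z t = Z s + ∫ u in s..t, g u) :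
    ∀ t ∈ Ioc a b, HasDerivWithinAt Z (g t) (Ioc a b) t := by
  intro t ht
  obtain ⟨s, has, hst⟩ := exists_between ht.1
  have hsub : Icc s b ⊆ Ioc a b := fun u hu => ⟨has.trans_le hu.1, hu.2⟩
  have ht' : t ∈ Icc s b := ⟨hst.le, ht.2⟩
  have hderiv := (hasDerivWithinAt_Icc_integral (hg.mono hsub) ht').const_add (Z s)
  have hZs : ∀ u ∈ Icc s b, Z u = Z s + ∫ v in s..u, g v := hZ s (hsub ⟨le_rfl, ht'.1.trans ht'.2⟩)
  refine (hderiv.congr_of_mem hZs ht').mono_of_mem_nhdsWithin ?_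
  exact mem_nhdsWithin.mpr ⟨Ioi s, isOpen_Ioi, hst, fun u hu => ⟨hu.1.le, hu.2.2⟩⟩

theorem nonneg_of_hasDerivAt_nonneg_of_neg {f f' : ℝ → ℝ} {a b : ℝ}
    (hf : ContinuousOn f (Icc a b)) (hf' : ∀ x ∈ Ioo a b, HasDerivAt f (f' x) x)
    (ha : 0 ≤ f a) (hneg : ∀ x ∈ Ioo a b, f x < 0 → 0 ≤ f' x) :
    ∀ x ∈ Icc a b, 0 ≤ f x := by
  intro x hx
  by_contra! hfx
  have hS : IsCompact (Icc a x ∩ f ⁻¹' Ici 0) :=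
    isCompact_Icc.of_isClosed_subset
      ((hf.mono (Icc_subset_Icc_right hx.2)).preimage_isClosed_of_isClosed isClosed_Icc isClosed_Ici)
      inter_subset_left
  -- `f < 0` on `(c, x]`, so `f' ≥ 0` there and `f c ≤ f x`.
  obtain ⟨c, ⟨hc, hfc⟩, hcmax⟩ := hS.exists_isGreatest ⟨a, ⟨left_mem_Icc.mpr hx.1, ha⟩⟩
  have hcx : c < x := hc.2.lt_of_ne (by rintro rfl; exact hfx.not_ge hfc)
  have hsub : Ioo c x ⊆ Ioo a b := Ioo_subset_Ioo hc.1 hx.2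
  have hmono : MonotoneOn f (Icc c x) := by
    refine monotoneOn_of_deriv_nonneg (convex_Icc c x)
      (hf.mono (Icc_subset_Icc hc.1 hx.2)) (fun u hu => ?_) (fun u hu => ?_) <;>
      rw [interior_Icc] at hu
    · exact (hf' u (hsub hu)).differentiableAt.differentiableWithinAt
    · rw [(hf' u (hsub hu)).deriv]
      refine hneg u (hsub hu) (not_le.mp fun hfu => hu.1.not_ge ?_)
      exact hcmax ⟨⟨hc.1.trans hu.1.le, hu.2.le⟩, hfu⟩
  exact hfx.not_ge (hfc.trans (hmono (left_mem_Icc.mpr hcx.le) (right_mem_Icc.mpr hcx.le) hcx.le))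

theorem exists_subseq_tendsto_of_lipschitzOnWith {α : Type*} [PseudoMetricSpace α] {s : Set α}
    (hs : IsCompact s) {f : ℕ → α → ℝ} {K : ℝ≥0} {C : ℝ}
    (hf : ∀ n, LipschitzOnWith K (f n) s) (hC : ∀ n, ∀ x ∈ s, |f n x| ≤ C) :
    ∃ (φ : ℕ → ℕ) (g : α → ℝ), StrictMono φ ∧ ContinuousOn g s ∧
      ∀ x ∈ s, Tendsto (fun k => f (φ k) x) atTop (𝓝 (g x)) := by
  classical
  have := isCompact_iff_compactSpace.mp hs
  let B : ℕ → BoundedContinuousFunction s ℝ := fun n =>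
    .mkOfCompact ⟨fun x => f n x, (hf n).to_restrict.continuous⟩
  have hB : IsCompact (closure (range B)) := by
    refine BoundedContinuousFunction.arzela_ascoli (Icc (-C) C) isCompact_Icc _ ?_ ?_
    · rintro _ x ⟨n, rfl⟩
      exact abs_le.mp (hC n x x.2)
    · refine (LipschitzWith.uniformEquicontinuous _ K fun b => ?_).equicontinuous
      obtain ⟨n, hn⟩ := b.2
      rw [← hn]
      exact (hf n).to_restrict
  obtain ⟨Y, -, φ, hφ, hY⟩ := hB.tendsto_subseq fun n => subset_closure (mem_range_self n)
  refine ⟨φ, fun x => if hx : x ∈ s then Y ⟨x, hx⟩ else 0, hφ, ?_, fun x hx => ?_⟩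
  · rw [continuousOn_iff_continuous_domRestrict]
    convert Y.continuous
    ext x
    simp [domRestrict, x.2]
  · simp only [dif_pos hx]
    exact ((continuous_eval_const (⟨x, hx⟩ : s)).tendsto Y).comp hY

noncomputable def delayedIterate (G : ℝ → ℝ → ℝ) (δ c : ℝ) : ℕ → ℝ → ℝ
  | 0 => fun _ => c
  | k + 1 => fun t => c + ∫ s in 0..max 0 (t - δ), G s (delayedIterate G δ c k s)

theorem continuous_delayedIterate {G : ℝ → ℝ → ℝ} (hG : Continuous (uncurry G)) (δ c : ℝ) :
    ∀ k, Continuous (delayedIterate G δ c k)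
  | 0 => continuous_const
  | k + 1 => by
    have hk : Continuous fun s => G s (delayedIterate G δ c k s) :=
      hG.comp (continuous_id.prodMk (continuous_delayedIterate hG δ c k))
    exact continuous_const.add ((intervalIntegral.continuous_primitive
      (fun a b => hk.intervalIntegrable a b) 0).comp (by fun_prop))

theorem delayedIterate_succ_of_le {G : ℝ → ℝ → ℝ} {δ : ℝ} (hδ : 0 ≤ δ) (c : ℝ) :
    ∀ k : ℕ, ∀ t ≤ k * δ, delayedIterate G δ c (k + 1) t = delayedIterate G δ c k t
  | 0, t, ht => by
    have : max 0 (t - δ) = 0 := max_eq_left (by push_cast at ht; linarith)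
    simp only [delayedIterate, this, intervalIntegral.integral_same, add_zero]
  | k + 1, t, ht => by
    show c + _ = c + _
    congr 1
    refine intervalIntegral.integral_congr fun s hs => ?_
    rw [uIcc_of_le (le_max_left _ _)] at hs
    have : s ≤ k * δ := hs.2.trans (max_le (by positivity) (by push_cast at ht; linarith))
    simp only [delayedIterate_succ_of_le hδ c k s this]

theorem exists_continuous_eq_delayed_integral {G : ℝ → ℝ → ℝ} (hG : Continuous (uncurry G))
    {δ : ℝ} (hδ : 0 < δ) (c T : ℝ) :
    ∃ y : ℝ → ℝ, Continuous y ∧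
      ∀ t ≤ T, y t = c + ∫ s in 0..max 0 (t - δ), G s (y s) := by
  obtain ⟨k, hk⟩ := exists_nat_ge (T / δ)
  refine ⟨delayedIterate G δ c k, continuous_delayedIterate hG δ c k, fun t ht => ?_⟩
  rw [← delayedIterate_succ_of_le hδ.le c k t (by linarith [(div_le_iff₀ hδ).mp hk])]
  rfl

theorem lipschitzOnWith_of_eq_delayed_integral {G : ℝ → ℝ → ℝ} {y : ℝ → ℝ} {δ c T : ℝ}
    {M : ℝ≥0} (hG : Continuous (uncurry G)) (hGM : ∀ s x, |G s x| ≤ M) (hy : Continuous y)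
    (hyT : ∀ t ≤ T, y t = c + ∫ s in 0..max 0 (t - δ), G s (y s)) :
    LipschitzOnWith M y (Iic T) := by
  have hL := lipschitzWith_intervalIntegral (hG.comp (continuous_id.prodMk hy))
    (fun s => hGM s (y s)) 0
  refine LipschitzOnWith.of_dist_le_mul fun u hu v hv => ?_
  rw [hyT u hu, hyT v hv, dist_add_left]
  calc _ ≤ M * dist (max 0 (u - δ)) (max 0 (v - δ)) := hL.dist_le_mul _ _
    _ ≤ M * dist u v := by
      gcongr
      rw [max_comm 0 (u - δ), max_comm 0 (v - δ), Real.dist_eq, Real.dist_eq]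
      exact (abs_max_sub_max_le_abs (u - δ) (v - δ) 0).trans_eq (by ring_nf)

theorem min_max_mem_Ioc {s ε τ : ℝ} (hε : 0 < ε) (hτ : 0 < τ) : min (max s ε) τ ∈ Ioc 0 τ :=
  ⟨lt_min (lt_max_of_lt_right hε) hτ, min_le_right _ _⟩

theorem continuous_uncurry_min_max {F : ℝ → ℝ → ℝ} {ε τ : ℝ} (hε : 0 < ε) (hτ : 0 < τ)
    (hFc : ContinuousOn (uncurry F) (Ioc 0 τ ×ˢ univ)) :
    Continuous (uncurry fun s x => F (min (max s ε) τ) x) :=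
  hFc.comp_continuous (f := fun p : ℝ × ℝ => (min (max p.1 ε) τ, p.2)) (by fun_prop)
    fun _ => ⟨min_max_mem_Ioc hε hτ, mem_univ _⟩

theorem tendsto_comp_sub_of_lipschitzOnWith {y : ℕ → ℝ → ℝ} {ε : ℕ → ℝ} {M : ℝ≥0} {u T z : ℝ}
    (hu : u ≤ T) (hε0 : ∀ n, 0 ≤ ε n) (hε : Tendsto ε atTop (𝓝 0))
    (hlip : ∀ n, LipschitzOnWith M (y n) (Iic T)) (hy : Tendsto (fun n => y n u) atTop (𝓝 z)) :
    Tendsto (fun n => y n (u - ε n)) atTop (𝓝 z) := by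
  have hdiff : Tendsto (fun n => y n (u - ε n) - y n u) atTop (𝓝 0) := by
    refine squeeze_zero_norm (fun n => ?_) (by simpa using hε.const_mul (M : ℝ))
    have := (hlip n).dist_le_mul (u - ε n) (by simp only [mem_Iic]; linarith [hε0 n]) u hu
    rwa [Real.dist_eq, Real.dist_eq, sub_sub_cancel_left, abs_neg, abs_of_nonneg (hε0 n)] at this
  simpa using hdiff.add hy

theorem eq_integral_of_tendsto_delayed {F : ℝ → ℝ → ℝ} {τ c : ℝ} {M : ℝ≥0} (hτ : 0 < τ)
    (hFc : ContinuousOn (uncurry F) (Ioc 0 τ ×ˢ univ)) (hFb : ∀ t ∈ Ioc 0 τ, ∀ x, |F t x| ≤ M)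
    {ε : ℕ → ℝ} (hε0 : ∀ n, 0 < ε n) (hε : Tendsto ε atTop (𝓝 0))
    {y : ℕ → ℝ → ℝ} (hyc : ∀ n, Continuous (y n)) (hlip : ∀ n, LipschitzOnWith M (y n) (Iic τ))
    (hy : ∀ n, ∀ t ≤ τ, y n t = c + ∫ s in 0..max 0 (t - ε n), F (min (max s (ε n)) τ) (y n s))
    {Z : ℝ → ℝ} (hZ : ∀ x ∈ Icc 0 τ, Tendsto (fun n => y n x) atTop (𝓝 (Z x))) :
    ∀ s ∈ Ioc 0 τ, ∀ t ∈ Icc s τ, Z t = Z s + ∫ u in s..t, F u (Z u) := by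
  intro s hs t ht
  have hgc : ∀ n, Continuous fun u => F (min (max u (ε n)) τ) (y n u) := fun n =>
    (continuous_uncurry_min_max (hε0 n) hτ hFc).comp (continuous_id.prodMk (hyc n))
  have hshift : ∀ n, ε n ≤ s →
      y n t - y n s = ∫ u in s..t, F (min (max (u - ε n) (ε n)) τ) (y n (u - ε n)) := by
    intro n hn
    have hmax : ∀ r, ε n ≤ r → max 0 (r - ε n) = r - ε n := fun r hr => max_eq_right (by linarith)
    rw [hy n t ht.2, hy n s (ht.1.trans ht.2), hmax t (hn.trans ht.1), hmax s hn,
      add_sub_add_left_eq_sub, intervalIntegral.integral_interval_sub_left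
        ((hgc n).intervalIntegrable _ _) ((hgc n).intervalIntegrable _ _)]
    exact (intervalIntegral.integral_comp_sub_right
      (fun u => F (min (max u (ε n)) τ) (y n u)) (ε n)).symm
  have hlim : Tendsto (fun n => ∫ u in s..t, F (min (max (u - ε n) (ε n)) τ) (y n (u - ε n)))
      atTop (𝓝 (∫ u in s..t, F u (Z u))) := by
    refine intervalIntegral.tendsto_integral_filter_of_dominated_convergence (fun _ => (M : ℝ))
      (Eventually.of_forall fun n => ((hgc n).comp (continuous_sub_right _)).aestronglyMeasurable)
      (Eventually.of_forall fun n => Eventually.of_forall fun u _ =>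
        hFb _ (min_max_mem_Ioc (hε0 n) hτ) _) intervalIntegrable_const
      (Eventually.of_forall fun u hu => ?_)
    rw [uIoc_of_le ht.1] at hu
    have hu0 : u ∈ Ioc 0 τ := ⟨hs.1.trans hu.1, hu.2.trans ht.2⟩
    have hclamp : Tendsto (fun n => min (max (u - ε n) (ε n)) τ) atTop (𝓝 u) := by
      have := (((tendsto_const_nhds (x := u)).sub hε).max hε).min (tendsto_const_nhds (x := τ))
      rwa [sub_zero, max_eq_left hu0.1.le, min_eq_left hu0.2] at this
    have hyu := tendsto_comp_sub_of_lipschitzOnWith hu0.2 (fun n => (hε0 n).le) hε hlip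
      (hZ u (Ioc_subset_Icc_self hu0))
    exact (hFc (u, Z u) ⟨hu0, mem_univ _⟩).tendsto.comp (tendsto_nhdsWithin_iff.mpr
      ⟨hclamp.prodMk_nhds hyu,
        Eventually.of_forall fun n => ⟨min_max_mem_Ioc (hε0 n) hτ, mem_univ _⟩⟩)
  have hdiff := ((hZ t ⟨hs.1.le.trans ht.1, ht.2⟩).sub (hZ s (Ioc_subset_Icc_self hs))).congr'
    ((hε.eventually (eventually_le_nhds hs.1)).mono hshift)
  linarith [tendsto_nhds_unique hdiff hlim]

theorem exists_hasDerivWithinAt_Ioc_of_bounded {F : ℝ → ℝ → ℝ} {τ : ℝ} {M : ℝ≥0} (hτ : 0 < τ)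
    (hFc : ContinuousOn (uncurry F) (Ioc 0 τ ×ˢ univ)) (hFb : ∀ t ∈ Ioc 0 τ, ∀ x, |F t x| ≤ M)
    (c : ℝ) :
    ∃ Z : ℝ → ℝ, ContinuousOn Z (Icc 0 τ) ∧ Z 0 = c ∧
      ∀ t ∈ Ioc 0 τ, HasDerivWithinAt Z (F t (Z t)) (Ioc 0 τ) t := by
  obtain ⟨ε, -, hε0, hε⟩ := exists_seq_strictAnti_tendsto (0 : ℝ)
  choose y hyc hy using fun n =>
    exists_continuous_eq_delayed_integral (continuous_uncurry_min_max (hε0 n) hτ hFc) (hε0 n) c τ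
  have hlip : ∀ n, LipschitzOnWith M (y n) (Iic τ) := fun n =>
    lipschitzOnWith_of_eq_delayed_integral (continuous_uncurry_min_max (hε0 n) hτ hFc)
      (fun _ _ => hFb _ (min_max_mem_Ioc (hε0 n) hτ) _) (hyc n) (hy n)
  have hy0 : ∀ n, y n 0 = c := fun n => by simpa [(hε0 n).le] using hy n 0 hτ.le
  have hbd : ∀ n, ∀ x ∈ Icc 0 τ, |y n x| ≤ |c| + M * τ := by
    intro n x hx
    have hdist := (hlip n).dist_le_mul x hx.2 0 hτ.le
    rw [hy0, Real.dist_eq, Real.dist_eq, sub_zero, abs_of_nonneg hx.1] at hdist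
    have hMx := mul_le_mul_of_nonneg_left hx.2 M.coe_nonneg
    linarith [abs_sub_abs_le_abs_sub (y n x) c]
  obtain ⟨φ, Z, hφ, hZc, hZ⟩ := exists_subseq_tendsto_of_lipschitzOnWith isCompact_Icc
    (fun n => (hlip n).mono Icc_subset_Iic_self) hbd
  have hZ0 : Z 0 = c := tendsto_nhds_unique (hZ 0 (left_mem_Icc.mpr hτ.le))
    (by simp only [hy0]; exact tendsto_const_nhds)
  have hint := eq_integral_of_tendsto_delayed hτ hFc hFb (fun k => hε0 (φ k))
    (hε.comp hφ.tendsto_atTop) (fun k => hyc (φ k)) (fun k => hlip (φ k)) (fun k => hy (φ k)) hZ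
  refine ⟨Z, hZc, hZ0, hasDerivWithinAt_Ioc_of_eq_integral ?_ hint⟩
  exact hFc.comp (continuousOn_id.prodMk (hZc.mono Ioc_subset_Icc_self))
    fun u hu => ⟨hu, mem_univ _⟩

theorem stmt8_general (τ : ℝ) (hτ : 0 < τ)
    (l : ℝ → ℝ → ℝ)
    (hlc : ContinuousOn (Function.uncurry l) (Set.Ioc 0 τ ×ˢ Set.Ioi 0))
    (hlb : ∃ M : ℝ, ∀ t ∈ Set.Ioc 0 τ, ∀ y ∈ Set.Ioi (0:ℝ), |l t y| ≤ M)
    (α α' : ℝ → ℝ)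
    (hαc : ContinuousOn α (Set.Icc 0 τ))
    (hαd : ∀ t ∈ Set.Ioc 0 τ, HasDerivWithinAt α (α' t) (Set.Ioc 0 τ) t)
    (hα0 : α 0 = 0)
    (hαpos : ∀ t ∈ Set.Ioc 0 τ, 0 < α t)
    (hineq : ∀ t ∈ Set.Ioo 0 τ, α' t ≤ l t (α t)) :
    ∃ y : ℝ → ℝ, ContinuousOn y (Set.Icc 0 τ) ∧ y 0 = 0 ∧
      (∀ t ∈ Set.Icc 0 τ, α t ≤ y t) ∧
      ∀ t ∈ Set.Ioc 0 τ, HasDerivWithinAt y (l t (y t)) (Set.Ioc 0 τ) t := by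
  obtain ⟨M, hM⟩ := hlb
  set F : ℝ → ℝ → ℝ := fun t x => l t (max x (α t))
  have hFc : ContinuousOn (uncurry F) (Ioc 0 τ ×ˢ univ) :=
    hlc.comp (continuousOn_fst.prodMk (continuousOn_snd.sup
      ((hαc.mono Ioc_subset_Icc_self).comp continuousOn_fst fun _ hp => hp.1)))
      fun p hp => ⟨hp.1, lt_max_of_lt_right (hαpos _ hp.1)⟩
  have hFb : ∀ t ∈ Ioc 0 τ, ∀ x, |F t x| ≤ M.toNNReal := fun t ht _ =>
    (hM t ht _ (lt_max_of_lt_right (hαpos t ht))).trans (Real.le_coe_toNNReal M)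
  obtain ⟨y, hyc, hy0, hy⟩ := exists_hasDerivWithinAt_Ioc_of_bounded hτ hFc hFb 0
  have hderiv : ∀ t ∈ Ioo 0 τ, HasDerivAt (fun t => y t - α t) (F t (y t) - α' t) t :=
    fun t ht => ((hy t (Ioo_subset_Ioc_self ht)).hasDerivAt (Ioc_mem_nhds ht.1 ht.2)).sub
      ((hαd t (Ioo_subset_Ioc_self ht)).hasDerivAt (Ioc_mem_nhds ht.1 ht.2))
  have hαy : ∀ t ∈ Icc 0 τ, α t ≤ y t := by
    refine fun t ht => sub_nonneg.mp (nonneg_of_hasDerivAt_nonneg_of_neg (hyc.sub hαc) hderiv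
      (by simp [hy0, hα0]) (fun u hu hneg => ?_) t ht)
    have hFu : F u (y u) = l u (α u) := congrArg (l u) (max_eq_right (sub_neg.mp hneg).le)
    rw [hFu, sub_nonneg]
    exact hineq u hu
  refine ⟨y, hyc, hy0, hαy, fun t ht => ?_⟩
  have hFt : F t (y t) = l t (y t) := congrArg (l t) (max_eq_left (hαy t (Ioc_subset_Icc_self ht)))
  exact hFt ▸ hy t ht

/-- existence of a solution to the singular ODE `y' = l(t,y)`, `y(0)=0`,
above a lower function `α`. -/
theorem stmt8 (τ : ℝ) (hτ : 0 < τ)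
    (l : ℝ → ℝ → ℝ)
    (hlc : ContinuousOn (Function.uncurry l) (Set.Ioc 0 τ ×ˢ Set.Ioi 0))
    (hlb : ∃ M : ℝ, ∀ t ∈ Set.Ioc 0 τ, ∀ y ∈ Set.Ioi (0:ℝ), |l t y| ≤ M)
    (α α' : ℝ → ℝ)
    (hαc : ContinuousOn α (Set.Icc 0 τ))
    (hαd : ∀ t ∈ Set.Ioc 0 τ, HasDerivWithinAt α (α' t) (Set.Ioc 0 τ) t)
    (hα'c : ContinuousOn α' (Set.Ioc 0 τ))
    (hα0 : α 0 = 0)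
    (hαpos : ∀ t ∈ Set.Ioc 0 τ, 0 < α t)
    (hineq : ∀ t ∈ Set.Ioo 0 τ, α' t ≤ l t (α t)) :
    ∃ y : ℝ → ℝ, ContinuousOn y (Set.Icc 0 τ) ∧ y 0 = 0 ∧
      (∀ t ∈ Set.Icc 0 τ, α t ≤ y t) ∧
      ∀ t ∈ Set.Ioc 0 τ, HasDerivWithinAt y (l t (y t)) (Set.Ioc 0 τ) t :=
  stmt8_general τ hτ l hlc hlb α α' hαc hαd hα0 hαpos hineq
end

section
/- Let T > 0, θ > 0, and let a:[0,T)→ℝ be continuous with a(t) ≥ 0 for all t∈[0,T) and limsup_{t↑T} a(t)/(θ√(T−t)) < 1. Then the backward ODE (♦) admits a positive solution, i.e., there exists Y:[0,T]→[0,∞), absolutely continuous on [0,T], right-differentiable on [0,T) with right-continuous right derivative, with Y'₊(t) = −f(t,Y(t)) on [0,T), Y(T) = 0, and Y(t) > 0 for all t∈[0,T). -/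
/-!
In reversed time `τ = T - t` the problem becomes the forward equation `X' = θ²X/(√X + A τ)²`,
`X 0 = 0`, with `A τ = a (T - τ)`; the right-hand side is Lipschitz in `X` only away from `0`.
Choose `s > 0` with `A τ < (1 - s)θ√τ` near `0`, and solve by Picard–Lindelöf from a time `ε > 0`
with initial value `s²θ²ε`. The bound on `A` makes `τ ↦ s²θ²τ` a strict lower barrier, so these
solutions increase as `ε ↓ 0` (two solutions cannot cross) and stay below `θ²τ`. Their increasing
limit is `θ²`-Lipschitz and positive, and passing to the limit in the integral equation shows that
it solves the equation.
-/

open MeasureTheory Set Filter Topology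

/-- Absolute continuity of `Y` on the interval `[a,b]` (classical ε–δ definition over
finite families of non-overlapping subintervals). -/
def AbsContOn (Y : ℝ → ℝ) (a b : ℝ) : Prop :=
  ∀ ε > (0:ℝ), ∃ δ > (0:ℝ), ∀ n : ℕ, ∀ I : Fin n → ℝ × ℝ,
    (∀ i, a ≤ (I i).1 ∧ (I i).1 ≤ (I i).2 ∧ (I i).2 ≤ b) →
    (∀ i j, i ≠ j → Disjoint (Set.Ioo (I i).1 (I i).2) (Set.Ioo (I j).1 (I j).2)) →
    (∑ i, ((I i).2 - (I i).1)) < δ →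
    (∑ i, |Y (I i).2 - Y (I i).1|) < ε

/-- The right-hand side `f(t,y) = θ² y/(√y + a(t))²` for `y>0`, with
`f(t,0) = θ²` if `a(t)=0` and `f(t,0) = 0` otherwise. -/
noncomputable def fODE (θ : ℝ) (a : ℝ → ℝ) (t y : ℝ) : ℝ :=
  if 0 < y then θ ^ 2 * y / (Real.sqrt y + a t) ^ 2
  else if a t = 0 then θ ^ 2 else 0

/-- A solution to the backward ODE (♦): `Y : [0,T] → [0,∞)` absolutely continuous,
right-differentiable on `[0,T)` with right-continuous right derivative,
`Y'₊(t) = −f(t,Y(t))` on `[0,T)`, and `Y(T) = 0`. -/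
def DiamondSol (T θ : ℝ) (a : ℝ → ℝ) (Y : ℝ → ℝ) : Prop :=
  (∀ t ∈ Set.Icc 0 T, 0 ≤ Y t) ∧
  AbsContOn Y 0 T ∧
  (∀ t ∈ Set.Ico 0 T, HasDerivWithinAt Y (-(fODE θ a t (Y t))) (Set.Ici t) t) ∧
  (∀ t ∈ Set.Ico 0 T,
      ContinuousWithinAt (fun s => fODE θ a s (Y s)) (Set.Ico t T) t) ∧
  Y T = 0

open scoped NNReal

noncomputable def fODEPos (θ α x : ℝ) : ℝ := θ ^ 2 * x / (√x + α) ^ 2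

lemma fODE_of_pos {θ : ℝ} {a : ℝ → ℝ} {t y : ℝ} (hy : 0 < y) :
    fODE θ a t y = fODEPos θ (a t) y :=
  if_pos hy

section fODEPos

variable (θ : ℝ) {α x : ℝ}

lemma fODEPos_nonneg (hx : 0 ≤ x) : 0 ≤ fODEPos θ α x := by
  unfold fODEPos; positivity

lemma fODEPos_le (hα : 0 ≤ α) (hx : 0 ≤ x) : fODEPos θ α x ≤ θ ^ 2 := by
  refine div_le_of_le_mul₀ (sq_nonneg _) (sq_nonneg θ) (mul_le_mul_of_nonneg_left ?_ (sq_nonneg θ))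
  nlinarith [Real.sq_sqrt hx, Real.sqrt_nonneg x]

lemma hasDerivAt_fODEPos (hα : 0 ≤ α) (hx : 0 < x) :
    HasDerivAt (fODEPos θ α) (θ ^ 2 * α / (√x + α) ^ 3) x := by
  have hs : 0 < √x := Real.sqrt_pos.2 hx
  have hden : HasDerivAt (fun y => (√y + α) ^ 2) ((2 : ℕ) * (√x + α) ^ 1 * (1 / (2 * √x))) x :=
    ((Real.hasDerivAt_sqrt hx.ne').add_const α).pow 2
  have hnum : HasDerivAt (fun y => θ ^ 2 * y) (θ ^ 2) x := by
    simpa using (hasDerivAt_id x).const_mul (θ ^ 2)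
  refine (hnum.div hden (by positivity)).congr_deriv ?_
  have hxs : x = √x ^ 2 := (Real.sq_sqrt hx.le).symm
  rw [hxs, Real.sqrt_sq hs.le]
  field_simp
  ring

lemma continuousOn_fODEPos {A X : ℝ → ℝ} {s : Set ℝ} (hA : ContinuousOn A s)
    (hX : ContinuousOn X s) (hA0 : ∀ τ ∈ s, 0 ≤ A τ) (hX0 : ∀ τ ∈ s, 0 < X τ) :
    ContinuousOn (fun τ => fODEPos θ (A τ) (X τ)) s := by
  refine (continuousOn_const.mul hX).div ((hX.sqrt.add hA).pow 2) fun τ hτ => ?_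
  have := Real.sqrt_pos.2 (hX0 τ hτ)
  have := hA0 τ hτ
  positivity

lemma lipschitzOnWith_fODEPos (hα : 0 ≤ α) {m : ℝ} (hm : 0 < m) :
    LipschitzOnWith (θ ^ 2 / m).toNNReal (fODEPos θ α) (Ici m) := by
  refine (convex_Ici m).lipschitzOnWith_of_nnnorm_hasDerivWithin_le
    (fun x hx => (hasDerivAt_fODEPos θ hα (hm.trans_le hx)).hasDerivWithinAt) fun x hx => ?_
  have hx0 : 0 < x := hm.trans_le hx
  have hs : 0 < √x := Real.sqrt_pos.2 hx0
  rw [← NNReal.coe_le_coe, coe_nnnorm, Real.norm_of_nonneg (by positivity),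
    Real.coe_toNNReal _ (by positivity)]
  calc θ ^ 2 * α / (√x + α) ^ 3 ≤ θ ^ 2 / x := by
        rw [div_le_div_iff₀ (by positivity) hx0]
        have hxs : x = √x ^ 2 := (Real.sq_sqrt hx0.le).symm
        have : α * √x ^ 2 ≤ (√x + α) ^ 3 := by nlinarith [mul_pos hs hs, sq_nonneg α]
        rw [← hxs] at this
        nlinarith [sq_nonneg θ]
    _ ≤ θ ^ 2 / m := div_le_div_of_nonneg_left (sq_nonneg θ) hm hx

lemma lipschitzWith_fODEPos_max (hα : 0 ≤ α) {m : ℝ} (hm : 0 < m) :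
    LipschitzWith (θ ^ 2 / m).toNNReal fun x => fODEPos θ α (max x m) := by
  have := (lipschitzOnWith_fODEPos θ hα hm).comp
    (LipschitzWith.id.max_const m).lipschitzOnWith (s := univ) fun x _ => le_max_right x m
  rwa [mul_one, lipschitzOnWith_univ] at this

/-- With `√(s²θ²τ) = sθ√τ`, the denominator is below `θ²τ` as soon as `α < (1 - s)θ√τ`. -/
lemma sq_mul_lt_fODEPos (hθ : 0 < θ) {s τ : ℝ} (hs : 0 < s) (hτ : 0 < τ) (hα : 0 ≤ α)
    (hαs : α < (1 - s) * θ * √τ) : s ^ 2 * θ ^ 2 < fODEPos θ α (s ^ 2 * θ ^ 2 * τ) := by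
  have hr : 0 < θ * √τ := mul_pos hθ (Real.sqrt_pos.2 hτ)
  have hsq : s ^ 2 * θ ^ 2 * τ = (s * (θ * √τ)) ^ 2 := by
    rw [mul_pow, mul_pow, Real.sq_sqrt hτ.le]; ring
  have hden : (s * (θ * √τ) + α) ^ 2 < (θ * √τ) ^ 2 :=
    pow_lt_pow_left₀ (by linarith) (by positivity) two_ne_zero
  unfold fODEPos
  rw [hsq, Real.sqrt_sq (by positivity), lt_div_iff₀ (by positivity)]
  calc s ^ 2 * θ ^ 2 * (s * (θ * √τ) + α) ^ 2 < s ^ 2 * θ ^ 2 * (θ * √τ) ^ 2 := by gcongr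
    _ = θ ^ 2 * (s * (θ * √τ)) ^ 2 := by ring

end fODEPos

lemma LipschitzOnWith.absContOn {Y : ℝ → ℝ} {K : ℝ≥0} {a b : ℝ}
    (hY : LipschitzOnWith K Y (Icc a b)) : AbsContOn Y a b := by
  intro ε hε
  refine ⟨ε / (K + 1), by positivity, fun n I hI _ hsum => ?_⟩
  have hterm : ∀ i, |Y (I i).2 - Y (I i).1| ≤ K * ((I i).2 - (I i).1) := fun i => by
    obtain ⟨h1, h2, h3⟩ := hI i
    simpa [Real.dist_eq, abs_of_nonneg (sub_nonneg.2 h2)] using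
      hY.dist_le_mul _ ⟨h1.trans h2, h3⟩ _ ⟨h1, h2.trans h3⟩
  calc ∑ i, |Y (I i).2 - Y (I i).1| ≤ K * ∑ i, ((I i).2 - (I i).1) := by
        rw [Finset.mul_sum]; exact Finset.sum_le_sum fun i _ => hterm i
    _ ≤ K * (ε / (K + 1)) := by gcongr
    _ < ε := by
        rw [mul_div_assoc', div_lt_iff₀ (by positivity)]
        nlinarith

lemma LipschitzOnWith.insert {α β : Type*} [PseudoMetricSpace α] [PseudoMetricSpace β]
    {f : α → β} {K : ℝ≥0} {s : Set α} {x : α} (hf : LipschitzOnWith K f s)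
    (hx : ∀ y ∈ s, dist (f y) (f x) ≤ K * dist y x) : LipschitzOnWith K f (insert x s) := by
  refine LipschitzOnWith.of_dist_le_mul ?_
  rintro y (rfl | hy) z (rfl | hz)
  · simp
  · rw [dist_comm, dist_comm y]; exact hx z hz
  · exact hx y hy
  · exact hf.dist_le_mul y hy z hz

lemma LipschitzOnWith.of_tendsto {α : Type*} [PseudoMetricSpace α] {ι : Type*} {l : Filter ι}
    [l.NeBot] {F : ι → α → ℝ} {f : α → ℝ} {K : ℝ≥0} {s : Set α}
    (hF : ∀ᶠ i in l, LipschitzOnWith K (F i) s)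
    (hlim : ∀ x ∈ s, Tendsto (F · x) l (𝓝 (f x))) : LipschitzOnWith K f s :=
  LipschitzOnWith.of_dist_le_mul fun x hx y hy =>
    le_of_tendsto ((hlim x hx).dist (hlim y hy)) (hF.mono fun _ hi => hi.dist_le_mul x hx y hy)

/-- At a crossing point the two solutions coincide from then on, by uniqueness. -/
theorem ODE_solution_le_of_mem_Icc_right {v : ℝ → ℝ → ℝ} {K : ℝ≥0} {a b : ℝ} {f g : ℝ → ℝ}
    (hv : ∀ t ∈ Ico a b, LipschitzWith K (v t))
    (hf : ContinuousOn f (Icc a b)) (hf' : ∀ t ∈ Ico a b, HasDerivWithinAt f (v t (f t)) (Ici t) t)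
    (hg : ContinuousOn g (Icc a b)) (hg' : ∀ t ∈ Ico a b, HasDerivWithinAt g (v t (g t)) (Ici t) t)
    (ha : f a ≤ g a) : ∀ t ∈ Icc a b, f t ≤ g t := by
  intro t ht
  by_contra! hlt
  obtain ⟨t₀, ht₀, hcross⟩ : ∃ t₀ ∈ Icc a t, (f - g) t₀ = 0 :=
    intermediate_value_Icc ht.1 ((hf.sub hg).mono (Icc_subset_Icc_right ht.2))
      ⟨by simpa using ha, by simpa using hlt.le⟩
  have hsub : Ico t₀ b ⊆ Ico a b := Ico_subset_Ico_left ht₀.1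
  have heq := ODE_solution_unique_of_mem_Icc_right (s := fun _ => univ)
    (fun t ht => (hv t (hsub ht)).lipschitzOnWith) (hf.mono (Icc_subset_Icc_left ht₀.1))
    (fun t ht => hf' t (hsub ht)) (fun _ _ => mem_univ _) (hg.mono (Icc_subset_Icc_left ht₀.1))
    (fun t ht => hg' t (hsub ht)) (fun _ _ => mem_univ _) (sub_eq_zero.1 hcross) ⟨ht₀.2, ht.2⟩
  exact hlt.ne' heq

theorem sub_eq_integral_of_tendsto {F F' : ℕ → ℝ → ℝ} {f f' : ℝ → ℝ} {a b C : ℝ} (hab : a ≤ b)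
    (hF : ∀ᶠ n in atTop, ∀ x ∈ Icc a b, HasDerivWithinAt (F n) (F' n x) (Icc a b) x)
    (hF'c : ∀ᶠ n in atTop, ContinuousOn (F' n) (Icc a b))
    (hF'C : ∀ᶠ n in atTop, ∀ x ∈ Icc a b, ‖F' n x‖ ≤ C)
    (hFf : ∀ x ∈ Icc a b, Tendsto (F · x) atTop (𝓝 (f x)))
    (hF'f : ∀ x ∈ Icc a b, Tendsto (F' · x) atTop (𝓝 (f' x))) :
    f b - f a = ∫ x in a..b, f' x := by
  have hIoc : uIoc a b ⊆ Icc a b := by rw [uIoc_of_le hab]; exact Ioc_subset_Icc_self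
  have hFTC : ∀ᶠ n in atTop, ∫ x in a..b, F' n x = F n b - F n a := by
    filter_upwards [hF, hF'c] with n hn hcn
    exact intervalIntegral.integral_eq_sub_of_hasDerivAt_of_le hab
      (fun x hx => (hn x hx).continuousWithinAt)
      (fun x hx => (hn x (Ioo_subset_Icc_self hx)).hasDerivAt (Icc_mem_nhds hx.1 hx.2))
      (hcn.intervalIntegrable_of_Icc hab)
  have hlim : Tendsto (fun n => ∫ x in a..b, F' n x) atTop (𝓝 (∫ x in a..b, f' x)) :=
    intervalIntegral.tendsto_integral_filter_of_dominated_convergence (fun _ => C)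
      (hF'c.mono fun n hn => (hn.mono hIoc).aestronglyMeasurable measurableSet_uIoc)
      (hF'C.mono fun n hn => ae_of_all _ fun x hx => hn x (hIoc hx)) intervalIntegrable_const
      (ae_of_all _ fun x hx => hF'f x (hIoc hx))
  exact tendsto_nhds_unique ((hFf b ⟨hab, le_rfl⟩).sub (hFf a ⟨le_rfl, hab⟩)) (hlim.congr' hFTC)

theorem hasDerivWithinAt_of_sub_eq_integral {f f' : ℝ → ℝ} {a b x : ℝ}
    (hf' : ContinuousOn f' (Icc a b)) (h : ∀ y ∈ Icc a b, f y - f a = ∫ z in a..y, f' z)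
    (hx : x ∈ Icc a b) : HasDerivWithinAt f (f' x) (Icc a b) x := by
  have hab : a ≤ b := hx.1.trans hx.2
  set g : ℝ → ℝ := fun y => f' (projIcc a b hab y)
  have hg : Continuous g :=
    hf'.comp_continuous (continuous_subtype_val.comp continuous_projIcc) fun y =>
      (projIcc a b hab y).2
  have hgf : EqOn g f' (Icc a b) := fun y hy => by simp [g, projIcc_of_mem hab hy]
  have hfg : ∀ y ∈ Icc a b, f y = f a + ∫ z in a..y, g z := fun y hy => by
    rw [intervalIntegral.integral_congr fun z hz => hgf (uIcc_subset_Icc ⟨le_rfl, hab⟩ hy hz),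
      ← h y hy, add_sub_cancel]
  rw [← hgf hx]
  exact (((hg.integral_hasStrictDerivAt a x).hasDerivAt.const_add (f a)).hasDerivWithinAt).congr
    hfg (hfg x hx)

def IsSolOn (θ : ℝ) (A : ℝ → ℝ) (ε T : ℝ) (X : ℝ → ℝ) : Prop :=
  ∀ τ ∈ Icc ε T, 0 < X τ ∧ HasDerivWithinAt X (fODEPos θ (A τ) (X τ)) (Icc ε T) τ

namespace IsSolOn

variable {θ ε T : ℝ} {A X Z : ℝ → ℝ}

lemma continuousOn (hX : IsSolOn θ A ε T X) : ContinuousOn X (Icc ε T) :=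
  fun τ hτ => (hX τ hτ).2.continuousWithinAt

lemma hasDerivWithinAt_Ici (hX : IsSolOn θ A ε T X) {τ : ℝ} (hτ : τ ∈ Ico ε T) :
    HasDerivWithinAt X (fODEPos θ (A τ) (X τ)) (Ici τ) τ :=
  (hX τ (Ico_subset_Icc_self hτ)).2.mono_of_mem_nhdsWithin (Icc_mem_nhdsGE_of_mem hτ)

lemma mono (hX : IsSolOn θ A ε T X) {ε' : ℝ} (h : ε ≤ ε') : IsSolOn θ A ε' T X :=
  fun τ hτ =>
    ⟨(hX τ (Icc_subset_Icc_left h hτ)).1, (hX τ (Icc_subset_Icc_left h hτ)).2.mono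
      (Icc_subset_Icc_left h)⟩

lemma monotoneOn (hX : IsSolOn θ A ε T X) : MonotoneOn X (Icc ε T) :=
  monotoneOn_of_hasDerivWithinAt_nonneg (convex_Icc ε T) hX.continuousOn
    (fun τ hτ => (hX τ (interior_subset hτ)).2.mono interior_subset)
    fun τ hτ => fODEPos_nonneg θ (hX τ (interior_subset hτ)).1.le

lemma lipschitzOnWith (hX : IsSolOn θ A ε T X) (hA0 : ∀ τ ∈ Icc ε T, 0 ≤ A τ) :
    LipschitzOnWith (θ ^ 2).toNNReal X (Icc ε T) :=
  (convex_Icc ε T).lipschitzOnWith_of_nnnorm_hasDerivWithin_le (fun τ hτ => (hX τ hτ).2)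
    fun τ hτ => by
      rw [← NNReal.coe_le_coe, coe_nnnorm, Real.coe_toNNReal _ (sq_nonneg θ),
        Real.norm_of_nonneg (fODEPos_nonneg θ (hX τ hτ).1.le)]
      exact fODEPos_le θ (hA0 τ hτ) (hX τ hτ).1.le

lemma le_sq_mul (hX : IsSolOn θ A ε T X) (hA0 : ∀ τ ∈ Icc ε T, 0 ≤ A τ)
    (hXε : X ε ≤ θ ^ 2 * ε) {τ : ℝ} (hτ : τ ∈ Icc ε T) : X τ ≤ θ ^ 2 * τ := by
  have := (hX.lipschitzOnWith hA0).dist_le_mul τ hτ ε ⟨le_rfl, hτ.1.trans hτ.2⟩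
  rw [Real.coe_toNNReal _ (sq_nonneg θ), Real.dist_eq, Real.dist_eq,
    abs_of_nonneg (sub_nonneg.2 hτ.1)] at this
  nlinarith [le_abs_self (X τ - X ε)]

lemma le_of_le (hX : IsSolOn θ A ε T X) (hZ : IsSolOn θ A ε T Z)
    (hA0 : ∀ τ ∈ Icc ε T, 0 ≤ A τ) (h : X ε ≤ Z ε) : ∀ τ ∈ Icc ε T, X τ ≤ Z τ := by
  intro τ hτ
  have hε : ε ∈ Icc ε T := ⟨le_rfl, hτ.1.trans hτ.2⟩
  set m := min (X ε) (Z ε)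
  have hm : 0 < m := lt_min (hX ε hε).1 (hZ ε hε).1
  have hmax : ∀ {Y}, IsSolOn θ A ε T Y → m ≤ Y ε → ∀ t ∈ Ico ε T,
      HasDerivWithinAt Y (fODEPos θ (A t) (max (Y t) m)) (Ici t) t := fun hY hYm t ht => by
    rw [max_eq_left (hYm.trans (hY.monotoneOn hε (Ico_subset_Icc_self ht) ht.1))]
    exact hY.hasDerivWithinAt_Ici ht
  exact ODE_solution_le_of_mem_Icc_right
    (fun t ht => lipschitzWith_fODEPos_max θ (hA0 t (Ico_subset_Icc_self ht)) hm)
    hX.continuousOn (hmax hX (min_le_left _ _)) hZ.continuousOn (hmax hZ (min_le_right _ _)) h τ hτ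

lemma sq_mul_le (hX : IsSolOn θ A ε T X) (hθ : 0 < θ) {s τ₀ : ℝ} (hs : 0 < s) (hε : 0 < ε)
    (hτ₀ : τ₀ ≤ T) (hA0 : ∀ τ ∈ Icc ε τ₀, 0 ≤ A τ)
    (hA : ∀ τ ∈ Icc ε τ₀, A τ < (1 - s) * θ * √τ) (hXε : s ^ 2 * θ ^ 2 * ε ≤ X ε) :
    ∀ τ ∈ Icc ε τ₀, s ^ 2 * θ ^ 2 * τ ≤ X τ :=
  image_le_of_deriv_right_lt_deriv_boundary' (f' := fun _ => s ^ 2 * θ ^ 2) (by fun_prop)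
    (fun τ _ => ((hasDerivAt_id τ).const_mul _).hasDerivWithinAt.congr_deriv (mul_one _)) hXε
    (hX.continuousOn.mono (Icc_subset_Icc_right hτ₀))
    (fun τ hτ => hX.hasDerivWithinAt_Ici ⟨hτ.1, hτ.2.trans_le hτ₀⟩) fun τ hτ heq => by
      rw [← heq]
      exact sq_mul_lt_fODEPos θ hθ hs (hε.trans_le hτ.1) (hA0 τ (Ico_subset_Icc_self hτ))
        (hA τ (Ico_subset_Icc_self hτ))

end IsSolOn

lemma exists_isSolOn {θ ε T m : ℝ} {A : ℝ → ℝ} (hεT : ε ≤ T) (hm : 0 < m)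
    (hA : ContinuousOn A (Icc ε T)) (hA0 : ∀ τ ∈ Icc ε T, 0 ≤ A τ) :
    ∃ X, X ε = m ∧ IsSolOn θ A ε T X := by
  set v : ℝ → ℝ → ℝ := fun τ x => fODEPos θ (A τ) (max x m)
  have hv : IsPicardLindelof v (tmin := ε) (tmax := T) ⟨ε, le_rfl, hεT⟩ m
      (θ ^ 2 * (T - ε) + 1).toNNReal 0 (θ ^ 2).toNNReal (θ ^ 2 / m).toNNReal := by
    refine ⟨fun τ hτ => (lipschitzWith_fODEPos_max θ (hA0 τ hτ) hm).lipschitzOnWith,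
      fun x _ => continuousOn_fODEPos θ hA continuousOn_const hA0 fun τ _ => hm.trans_le
        (le_max_right x m), fun τ hτ x _ => ?_, ?_⟩
    · rw [Real.norm_of_nonneg (fODEPos_nonneg θ (hm.le.trans (le_max_right x m))),
        Real.coe_toNNReal _ (sq_nonneg θ)]
      exact fODEPos_le θ (hA0 τ hτ) (hm.le.trans (le_max_right x m))
    · rw [Real.coe_toNNReal _ (sq_nonneg θ), Real.coe_toNNReal _ (by nlinarith [sq_nonneg θ]),
        NNReal.coe_zero, sub_zero, sub_self, max_eq_left (sub_nonneg.2 hεT)]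
      linarith
  obtain ⟨X, hXε, hX⟩ := hv.exists_eq_forall_mem_Icc_hasDerivWithinAt₀
  have hXm : ∀ τ ∈ Icc ε T, m ≤ X τ := by
    refine fun τ hτ => hXε ▸ monotoneOn_of_hasDerivWithinAt_nonneg (convex_Icc ε T)
      (fun τ hτ => (hX τ hτ).continuousWithinAt)
      (fun τ hτ => (hX τ (interior_subset hτ)).mono interior_subset)
      (fun τ _ => fODEPos_nonneg θ (hm.le.trans (le_max_right _ m))) ⟨le_rfl, hεT⟩ hτ hτ.1
  refine ⟨X, hXε, fun τ hτ => ⟨hm.trans_le (hXm τ hτ), ?_⟩⟩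
  simpa only [v, max_eq_left (hXm τ hτ)] using hX τ hτ

/-- The time-reversed form `X τ = Y (T - τ)` of a positive solution of (♦),
with `A τ = a (T - τ)`. -/
def IsReversedSol (θ T : ℝ) (A X : ℝ → ℝ) : Prop :=
  X 0 = 0 ∧ (∀ τ ∈ Ioc 0 T, 0 < X τ) ∧ LipschitzOnWith (θ ^ 2).toNNReal X (Icc 0 T) ∧
    ∀ τ ∈ Ioc 0 T, HasDerivWithinAt X (fODEPos θ (A τ) (X τ)) (Icc 0 T) τ

section Limit

variable {θ T : ℝ} {A : ℝ → ℝ} {e : ℕ → ℝ} {X : ℕ → ℝ → ℝ}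

lemma IsSolOn.of_tendsto {b : ℝ} {Xl : ℝ → ℝ} (hA : ContinuousOn A (Icc b T))
    (hA0 : ∀ τ ∈ Icc b T, 0 ≤ A τ) (hX : ∀ᶠ n in atTop, IsSolOn θ A b T (X n))
    (hXl : ContinuousOn Xl (Icc b T)) (hXl0 : ∀ τ ∈ Icc b T, 0 < Xl τ)
    (hlim : ∀ τ ∈ Icc b T, Tendsto (X · τ) atTop (𝓝 (Xl τ))) : IsSolOn θ A b T Xl := by
  have hG := continuousOn_fODEPos θ hA hXl hA0 hXl0
  refine fun τ hτ => ⟨hXl0 τ hτ, hasDerivWithinAt_of_sub_eq_integral hG (fun σ hσ => ?_) hτ⟩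
  have hsub : Icc b σ ⊆ Icc b T := Icc_subset_Icc_right hσ.2
  refine sub_eq_integral_of_tendsto (C := θ ^ 2) hσ.1
    (hX.mono fun n hn x hx => (hn x (hsub hx)).2.mono hsub)
    (hX.mono fun n hn => (continuousOn_fODEPos θ hA hn.continuousOn hA0 fun x hx =>
      (hn x hx).1).mono hsub)
    (hX.mono fun n hn x hx => ?_) (fun x hx => hlim x (hsub hx)) fun x hx => ?_
  · rw [Real.norm_of_nonneg (fODEPos_nonneg θ (hn x (hsub hx)).1.le)]
    exact fODEPos_le θ (hA0 x (hsub hx)) (hn x (hsub hx)).1.le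
  · exact (hasDerivAt_fODEPos θ (hA0 x (hsub hx)) (hXl0 x (hsub hx))).continuousAt.tendsto.comp
      (hlim x (hsub hx))

/-- Each solution is extended by `0` below its starting time, which keeps the sequence
increasing in `n`. -/
lemma exists_tendsto_of_monotone (hA0 : ∀ τ ∈ Ioc 0 T, 0 ≤ A τ) (he : ∀ n, 0 < e n)
    (he_anti : Antitone e) (he0 : Tendsto e atTop (𝓝 0)) (hX : ∀ n, IsSolOn θ A (e n) T (X n))
    (hXe : ∀ n, X n (e n) ≤ θ ^ 2 * e n)
    (hmono : ∀ n, ∀ τ ∈ Icc (e n) T, X n τ ≤ X (n + 1) τ) :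
    ∃ Xl : ℝ → ℝ, Xl 0 = 0 ∧
      ∀ τ ∈ Ioc 0 T, 0 < Xl τ ∧ Xl τ ≤ θ ^ 2 * τ ∧ Tendsto (X · τ) atTop (𝓝 (Xl τ)) := by
  set g : ℕ → ℝ → ℝ := fun n τ => if e n ≤ τ then X n τ else 0
  have hg : ∀ τ ∈ Icc 0 T, ∀ n, 0 ≤ g n τ ∧ g n τ ≤ θ ^ 2 * τ := fun τ hτ n => by
    by_cases h : e n ≤ τ
    · simp only [g, if_pos h]
      exact ⟨(hX n τ ⟨h, hτ.2⟩).1.le, (hX n).le_sq_mul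
        (fun σ hσ => hA0 σ ⟨(he n).trans_le hσ.1, hσ.2⟩) (hXe n) ⟨h, hτ.2⟩⟩
    · simp only [g, if_neg h]
      exact ⟨le_rfl, by have := hτ.1; positivity⟩
  have hg_mono : ∀ τ ∈ Icc 0 T, Monotone (g · τ) := fun τ hτ => monotone_nat_of_le_succ fun n => by
    by_cases h : e n ≤ τ
    · simp only [g, if_pos h, if_pos ((he_anti n.le_succ).trans h)]
      exact hmono n τ ⟨h, hτ.2⟩
    · simp only [g, if_neg h]
      exact (hg τ hτ (n + 1)).1
  have hbdd : ∀ τ ∈ Icc 0 T, BddAbove (range (g · τ)) := fun τ hτ =>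
    ⟨θ ^ 2 * τ, forall_mem_range.2 fun n => (hg τ hτ n).2⟩
  refine ⟨fun τ => ⨆ n, g n τ, by simp [g, fun n => (he n).not_ge], fun τ hτ => ?_⟩
  have hτ' : τ ∈ Icc 0 T := Ioc_subset_Icc_self hτ
  have hev : ∀ᶠ n in atTop, e n < τ := he0.eventually (gt_mem_nhds hτ.1)
  obtain ⟨N, hN⟩ := hev.exists
  refine ⟨?_, ciSup_le fun n => (hg τ hτ' n).2, ?_⟩
  · refine lt_of_lt_of_le ?_ (le_ciSup (hbdd τ hτ') N)
    simpa only [g, if_pos hN.le] using (hX N τ ⟨hN.le, hτ.2⟩).1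
  · exact (tendsto_atTop_ciSup (hg_mono τ hτ') (hbdd τ hτ')).congr'
      (hev.mono fun n hn => if_pos hn.le)

lemma isReversedSol_of_tendsto {Xl : ℝ → ℝ} (hA : ContinuousOn A (Ioc 0 T))
    (hA0 : ∀ τ ∈ Ioc 0 T, 0 ≤ A τ) (he0 : Tendsto e atTop (𝓝 0))
    (hX : ∀ n, IsSolOn θ A (e n) T (X n)) (h0 : Xl 0 = 0)
    (hXl : ∀ τ ∈ Ioc 0 T, 0 < Xl τ ∧ Xl τ ≤ θ ^ 2 * τ ∧ Tendsto (X · τ) atTop (𝓝 (Xl τ))) :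
    IsReversedSol θ T A Xl := by
  have hsub : ∀ {b}, 0 < b → Icc b T ⊆ Ioc 0 T := fun hb τ hτ => ⟨hb.trans_le hτ.1, hτ.2⟩
  have hX' : ∀ {b}, 0 < b → ∀ᶠ n in atTop, IsSolOn θ A b T (X n) := fun hb =>
    (he0.eventually (ge_mem_nhds hb)).mono fun n hn => (hX n).mono hn
  have hlip_Icc : ∀ {b}, 0 < b → LipschitzOnWith (θ ^ 2).toNNReal Xl (Icc b T) := fun hb =>
    LipschitzOnWith.of_tendsto ((hX' hb).mono fun n hn =>
      hn.lipschitzOnWith fun τ hτ => hA0 τ (hsub hb hτ)) fun τ hτ => (hXl τ (hsub hb hτ)).2.2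
  have hlip : LipschitzOnWith (θ ^ 2).toNNReal Xl (Icc 0 T) := by
    refine LipschitzOnWith.mono (t := insert 0 (Ioc 0 T)) ?_
      fun τ hτ => hτ.1.eq_or_lt.imp Eq.symm fun h => ⟨h, hτ.2⟩
    refine LipschitzOnWith.insert (LipschitzOnWith.of_dist_le_mul fun x hx y hy => ?_)
      fun y hy => ?_
    · exact (hlip_Icc (lt_min hx.1 hy.1)).dist_le_mul x ⟨min_le_left _ _, hx.2⟩
        y ⟨min_le_right _ _, hy.2⟩
    · rw [h0, Real.dist_eq, Real.dist_eq, sub_zero, sub_zero, abs_of_pos (hXl y hy).1,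
        abs_of_pos hy.1, Real.coe_toNNReal _ (sq_nonneg θ)]
      exact (hXl y hy).2.1
  refine ⟨h0, fun τ hτ => (hXl τ hτ).1, hlip, fun τ hτ => ?_⟩
  have hb : 0 < τ / 2 := half_pos hτ.1
  have hsol : IsSolOn θ A (τ / 2) T Xl :=
    IsSolOn.of_tendsto (hA.mono (hsub hb)) (fun σ hσ => hA0 σ (hsub hb hσ)) (hX' hb)
      (hlip_Icc hb).continuousOn (fun σ hσ => (hXl σ (hsub hb hσ)).1)
      fun σ hσ => (hXl σ (hsub hb hσ)).2.2
  refine (hsol τ ⟨half_le_self hτ.1.le, hτ.2⟩).2.mono_of_mem_nhdsWithin ?_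
  exact mem_nhdsWithin.2
    ⟨Ioi (τ / 2), isOpen_Ioi, half_lt_self hτ.1, fun σ hσ => ⟨le_of_lt hσ.1, hσ.2.2⟩⟩

end Limit

lemma exists_lt_one_sub_mul_sqrt {θ T : ℝ} {A : ℝ → ℝ} (hT : 0 < T) (hθ : 0 < θ)
    (hAb : ∃ c < 1, ∀ᶠ τ in 𝓝[>] 0, A τ ≤ c * θ * √τ) :
    ∃ s τ₀, 0 < s ∧ s ≤ 1 ∧ 0 < τ₀ ∧ τ₀ ≤ T ∧ ∀ τ ∈ Ioc 0 τ₀, A τ < (1 - s) * θ * √τ := by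
  obtain ⟨c, hc, hev⟩ := hAb
  obtain ⟨u, hu, hsub⟩ := mem_nhdsGT_iff_exists_Ioc_subset.1 hev
  refine ⟨(1 - max c 0) / 2, min u T, by linarith [max_lt hc one_pos],
    by linarith [le_max_right c 0], lt_min hu hT, min_le_right u T, fun τ hτ => ?_⟩
  have hr : 0 < θ * √τ := mul_pos hθ (Real.sqrt_pos.2 hτ.1)
  have hA : A τ ≤ c * θ * √τ := hsub ⟨hτ.1, hτ.2.trans (min_le_left u T)⟩
  have : c * (θ * √τ) < (1 - (1 - max c 0) / 2) * (θ * √τ) :=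
    mul_lt_mul_of_pos_right (by linarith [le_max_left c 0, max_lt hc one_pos]) hr
  linarith [mul_assoc c θ √τ, mul_assoc (1 - (1 - max c 0) / 2) θ √τ]

theorem exists_isReversedSol {θ T : ℝ} {A : ℝ → ℝ} (hT : 0 < T) (hθ : 0 < θ)
    (hA : ContinuousOn A (Ioc 0 T)) (hA0 : ∀ τ ∈ Ioc 0 T, 0 ≤ A τ)
    (hAb : ∃ c < 1, ∀ᶠ τ in 𝓝[>] 0, A τ ≤ c * θ * √τ) : ∃ X, IsReversedSol θ T A X := by
  obtain ⟨s, τ₀, hs, hs1, hτ₀, hτ₀T, hAs⟩ := exists_lt_one_sub_mul_sqrt hT hθ hAb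
  set e : ℕ → ℝ := fun n => τ₀ / (n + 1)
  have he : ∀ n, 0 < e n := fun n => by positivity
  have he_le : ∀ n, e n ≤ τ₀ := fun n => div_le_self hτ₀.le (by simp)
  have he_anti : Antitone e := fun n k h => by
    simp only [e]; gcongr
  have he0 : Tendsto e atTop (𝓝 0) := by
    simpa [e, div_eq_mul_inv] using tendsto_one_div_add_atTop_nhds_zero_nat.const_mul τ₀
  have hsubIcc : ∀ n, Icc (e n) T ⊆ Ioc 0 T := fun n τ hτ => ⟨(he n).trans_le hτ.1, hτ.2⟩
  choose X hXe hX using fun n => exists_isSolOn (θ := θ) (A := A) ((he_le n).trans hτ₀T)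
    (by have := he n; positivity : 0 < s ^ 2 * θ ^ 2 * e n) (hA.mono (hsubIcc n))
    fun τ hτ => hA0 τ (hsubIcc n hτ)
  have hbarrier : ∀ n, ∀ τ ∈ Icc (e n) τ₀, s ^ 2 * θ ^ 2 * τ ≤ X n τ := fun n =>
    (hX n).sq_mul_le hθ hs (he n) hτ₀T
      (fun τ hτ => hA0 τ ⟨(he n).trans_le hτ.1, hτ.2.trans hτ₀T⟩)
      (fun τ hτ => hAs τ ⟨(he n).trans_le hτ.1, hτ.2⟩) (hXe n).ge
  -- `X n` starts on the barrier at `e n`, where `X (n + 1)` already lies above it.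
  have hmono : ∀ n, ∀ τ ∈ Icc (e n) T, X n τ ≤ X (n + 1) τ := fun n =>
    (hX n).le_of_le ((hX (n + 1)).mono (he_anti n.le_succ)) (fun τ hτ => hA0 τ (hsubIcc n hτ))
      ((hXe n).trans_le (hbarrier (n + 1) (e n) ⟨he_anti n.le_succ, he_le n⟩))
  have hXe' : ∀ n, X n (e n) ≤ θ ^ 2 * e n := fun n => by
    rw [hXe n, mul_assoc]
    exact mul_le_of_le_one_left (by have := he n; positivity) (pow_le_one₀ hs.le hs1)
  obtain ⟨Xl, h0, hXl⟩ := exists_tendsto_of_monotone hA0 he he_anti he0 hX hXe' hmono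
  exact ⟨Xl, isReversedSol_of_tendsto hA hA0 he0 hX h0 hXl⟩

theorem IsReversedSol.diamondSol {θ T : ℝ} {a X : ℝ → ℝ}
    (hX : IsReversedSol θ T (fun τ => a (T - τ)) X) (hac : ContinuousOn a (Ico 0 T))
    (ha0 : ∀ t ∈ Ico 0 T, 0 ≤ a t) :
    DiamondSol T θ a (fun t => X (T - t)) ∧ ∀ t ∈ Ico 0 T, 0 < X (T - t) := by
  obtain ⟨h0, hpos, hlip, hderiv⟩ := hX
  have hmem : ∀ {t}, t ∈ Ico 0 T → T - t ∈ Ioc 0 T := fun ht =>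
    ⟨by linarith [ht.2], by linarith [ht.1]⟩
  have hpos' : ∀ t ∈ Ico 0 T, 0 < X (T - t) := fun t ht => hpos _ (hmem ht)
  have hlip' : LipschitzOnWith (θ ^ 2).toNNReal (fun t => X (T - t)) (Icc 0 T) :=
    LipschitzOnWith.of_dist_le_mul fun x hx y hy => by
      simpa only [dist_sub_left] using
        hlip.dist_le_mul (T - x) ⟨by linarith [hx.2], by linarith [hx.1]⟩
          (T - y) ⟨by linarith [hy.2], by linarith [hy.1]⟩
  have hcont : ContinuousOn (fun t => fODE θ a t (X (T - t))) (Ico 0 T) :=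
    (continuousOn_fODEPos θ hac (hlip'.continuousOn.mono Ico_subset_Icc_self) ha0 hpos').congr
      fun t ht => fODE_of_pos (hpos' t ht)
  refine ⟨⟨fun t ht => ?_, hlip'.absContOn, fun t ht => ?_,
    fun t ht => (hcont t ht).mono (Ico_subset_Ico_left ht.1), by simpa using h0⟩, hpos'⟩
  · show 0 ≤ X (T - t)
    rcases (sub_nonneg.2 ht.2).eq_or_lt with h | h
    · rw [← h, h0]
    · exact (hpos _ ⟨h, by linarith [ht.1]⟩).le
  · have hrefl : HasDerivWithinAt (fun s => T - s) (-1) (Icc t T) t :=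
      ((hasDerivAt_id t).const_sub T).hasDerivWithinAt
    have := (hderiv _ (hmem ht)).comp t hrefl fun s hs =>
      ⟨by linarith [hs.2], by linarith [hs.1, ht.1]⟩
    simp only [sub_sub_cancel, mul_neg_one] at this
    rw [← fODE_of_pos (hpos' t ht)] at this
    exact this.mono_of_mem_nhdsWithin (Icc_mem_nhdsGE ht.2)

/-- if `a ≥ 0` is continuous on `[0,T)` and
`limsup_{t↑T} a(t)/(θ√(T−t)) < 1`, then the backward ODE (♦) admits a positive
solution. -/
theorem stmt10 (T θ : ℝ) (hT : 0 < T) (hθ : 0 < θ)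
    (a : ℝ → ℝ) (hac : ContinuousOn a (Set.Ico 0 T))
    (ha0 : ∀ t ∈ Set.Ico 0 T, 0 ≤ a t)
    (hlimsup : ∃ c < (1:ℝ), ∀ᶠ t in 𝓝[<] T, a t / (θ * Real.sqrt (T - t)) ≤ c) :
    ∃ Y : ℝ → ℝ, DiamondSol T θ a Y ∧ ∀ t ∈ Set.Ico 0 T, 0 < Y t := by
  obtain ⟨c, hc, hev⟩ := hlimsup
  have hrefl : Tendsto (fun τ => T - τ) (𝓝[>] 0) (𝓝[<] T) :=
    tendsto_nhdsWithin_of_tendsto_nhds_of_eventually_within _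
      (((continuous_sub_left T).tendsto' 0 T (sub_zero T)).mono_left nhdsWithin_le_nhds)
      (eventually_nhdsWithin_of_forall fun τ hτ => sub_lt_self T hτ)
  have hAb : ∀ᶠ τ in 𝓝[>] 0, a (T - τ) ≤ c * θ * √τ :=
    (hrefl.eventually hev).mp <| eventually_nhdsWithin_of_forall fun τ hτ h => by
      rwa [sub_sub_cancel, div_le_iff₀ (mul_pos hθ (Real.sqrt_pos.2 hτ)), ← mul_assoc] at h
  have hmaps : ∀ τ ∈ Ioc 0 T, T - τ ∈ Ico 0 T := fun τ hτ =>
    ⟨by linarith [hτ.2], by linarith [hτ.1]⟩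
  obtain ⟨X, hX⟩ := exists_isReversedSol hT hθ
    (hac.comp (continuousOn_const.sub continuousOn_id) hmaps) (fun τ hτ => ha0 _ (hmaps τ hτ))
    ⟨c, hc, hAb⟩
  exact ⟨_, hX.diamondSol hac ha0⟩
end
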